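/- arXiv:1401.2244 — 3 statements merged into one kernel-verified Lean document; each statement's English description precedes it below -/
import Mathlib

section
/- Let n = 2k with k ≥ 1 be an even integer. Let Λ, a₀, a₁, …, aₙ : ℝ² → ℝ be smooth functions with Λ > 0 everywhere, and let c₁, c₂ ∈ ℝ be constants such that the Kolokoltsov relations hold: a_{n-1} = c₁ + Σ_{j=1}^{k-1} (−1)^{j+1} a_{n-1-2j} and a_n = c₂ + Σ_{j=1}^{k} (−1)^{j+1} a_{n-2j}. Suppose that the Poisson bracket {H, F} vanishes identically on ℝ² × ℝ², where H = (p₁² + p₂²)/(2Λ(x,y)) and F = Σ_{i=0}^{n} a_i(x,y) p₁^{n-i} p₂^{i}. Then the following two conservation laws hold identically on ℝ²: ∂_x[(Σ_{j=0}^{k-1} (−1)^j (n−2j) a_{2j}) Λ] + ∂_y[(Σ_{j=1}^{k-1} (−1)^j (n−2j) a_{2j-1} + (−1)^{k+1}(n−1)c₁) Λ] = 0, and ∂_x[(Σ_{j=1}^{k-1} (−1)^{j+1} (n−2j) a_{2j-1} + (−1)^{k+1} c₁) Λ] + ∂_y[(Σ_{j=0}^{k-1} (−1)^j (n−2j) a_{2j}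 + (−1)^{k+1} n c₂) Λ] = 0. -/
open Real Finset

/-- Partial derivative with respect to the first variable. -/
noncomputable def pdx (f : ℝ × ℝ → ℝ) : ℝ × ℝ → ℝ :=
  fun p => deriv (fun s => f (s, p.2)) p.1

/-- Partial derivative with respect to the second variable. -/
noncomputable def pdy (f : ℝ × ℝ → ℝ) : ℝ × ℝ → ℝ :=
  fun p => deriv (fun s => f (p.1, s)) p.2

/-- Partial derivative of a function on phase space `T*ℝ²` w.r.t. `x`. -/
noncomputable def pq1 (G : (ℝ × ℝ) × ℝ × ℝ → ℝ) : (ℝ × ℝ) × ℝ × ℝ → ℝ :=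
  fun z => deriv (fun s => G ((s, z.1.2), z.2)) z.1.1

/-- Partial derivative of a function on phase space `T*ℝ²` w.r.t. `y`. -/
noncomputable def pq2 (G : (ℝ × ℝ) × ℝ × ℝ → ℝ) : (ℝ × ℝ) × ℝ × ℝ → ℝ :=
  fun z => deriv (fun s => G ((z.1.1, s), z.2)) z.1.2

/-- Partial derivative of a function on phase space `T*ℝ²` w.r.t. `p₁`. -/
noncomputable def pp1 (G : (ℝ × ℝ) × ℝ × ℝ → ℝ) : (ℝ × ℝ) × ℝ × ℝ → ℝ :=
  fun z => deriv (fun s => G (z.1, (s, z.2.2))) z.2.1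

/-- Partial derivative of a function on phase space `T*ℝ²` w.r.t. `p₂`. -/
noncomputable def pp2 (G : (ℝ × ℝ) × ℝ × ℝ → ℝ) : (ℝ × ℝ) × ℝ × ℝ → ℝ :=
  fun z => deriv (fun s => G (z.1, (z.2.1, s))) z.2.2

/-- The Poisson bracket `{G, K}` on `T*ℝ²`. -/
noncomputable def poisson (G K : (ℝ × ℝ) × ℝ × ℝ → ℝ) : (ℝ × ℝ) × ℝ × ℝ → ℝ :=
  fun z => pq1 K z * pp1 G z - pp1 K z * pq1 G z + pq2 K z * pp2 G z - pp2 K z * pq2 G z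

/-! ### Auxiliary lemmas -/

section Aux
open Polynomial

lemma sliceX {f : ℝ × ℝ → ℝ} (hf : ContDiff ℝ (⊤ : ℕ∞) f) (x y : ℝ) :
    HasDerivAt (fun s => f (s, y)) (pdx f (x, y)) x := by
  have hd : DifferentiableAt ℝ (fun s : ℝ => f (s, y)) x :=
    (hf.differentiable (by simp) (x, y)).comp x
      (differentiableAt_id.prodMk (differentiableAt_const y))
  exact hd.hasDerivAt

lemma sliceY {f : ℝ × ℝ → ℝ} (hf : ContDiff ℝ (⊤ : ℕ∞) f) (x y : ℝ) :
    HasDerivAt (fun s => f (x, s)) (pdy f (x, y)) y := by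
  have hd : DifferentiableAt ℝ (fun s : ℝ => f (x, s)) y :=
    (hf.differentiable (by simp) (x, y)).comp y
      ((differentiableAt_const x).prodMk differentiableAt_id)
  exact hd.hasDerivAt

lemma sum_Icc_shift (m : ℕ) (f : ℕ → ℝ) : ∑ j ∈ Icc 1 m, f j = ∑ j ∈ range m, f (j+1) := by
  rw [← Finset.Ico_add_one_right_eq_Icc, Finset.sum_Ico_eq_sum_range]
  simp [add_comm]

lemma npow_congr (i j : ℕ) (h : i % 2 = j % 2) : (-1:ℝ)^i = (-1)^j := by
  rw [neg_one_pow_eq_pow_mod_two, h, ← neg_one_pow_eq_pow_mod_two]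

lemma kol_core (m : ℕ) (g : ℕ → ℝ) (c : ℝ)
    (h : g m = c + ∑ j ∈ Icc 1 m, (-1 : ℝ) ^ (j + 1) * g (m - j)) :
    ∑ j ∈ range (m + 1), (-1 : ℝ) ^ j * g j = (-1) ^ m * c := by
  rcases Nat.eq_zero_or_pos m with hm | hm
  · subst hm; simp at h ⊢; linarith
  rw [sum_Icc_shift] at h
  have h1 : ∀ j ∈ range m, (-1 : ℝ) ^ (j + 1 + 1) * g (m - (j + 1))
      = (-1) ^ (m-1) * ((-1) ^ (m - 1 - j) * g (m - 1 - j)) := by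
    intro j hj
    rw [mem_range] at hj
    rw [show m - (j+1) = m - 1 - j from by omega, ← mul_assoc]
    congr 1
    rw [← pow_add]
    exact npow_congr _ _ (by omega)
  rw [Finset.sum_congr rfl h1, ← Finset.mul_sum,
    Finset.sum_range_reflect (fun j => (-1:ℝ)^j * g j) m] at h
  rw [Finset.sum_range_succ, h]
  have key : ((-1:ℝ))^m * (-1)^(m-1) = -1 := by
    rw [← pow_add]
    have := npow_congr (m + (m-1)) 1 (by omega)
    simpa using this
  linear_combination (∑ x ∈ range m, (-1:ℝ)^x * g x) * key

lemma eval_CXpow (N : ℕ) (c : ℕ → ℝ) (t : ℝ) :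
    (∑ i ∈ range N, C (c i) * X ^ i).eval t = ∑ i ∈ range N, c i * t ^ i := by
  simp [eval_finset_sum]

lemma coeff_CXpow (N : ℕ) (c : ℕ → ℝ) (hc : ∀ j, N ≤ j → c j = 0) (m : ℕ) :
    (∑ i ∈ range N, C (c i) * X ^ i).coeff m = c m := by
  rw [finset_sum_coeff]
  simp only [coeff_C_mul, coeff_X_pow, mul_ite, mul_one, mul_zero]
  rw [Finset.sum_ite_eq (range N) m c]
  by_cases h : m ∈ range N
  · simp [h]
  · simp [h]; exact (hc m (by simpa using h)).symm

lemma coeffs_from_eval (n : ℕ) (L Lx Ly : ℝ) (u ux uy : ℕ → ℝ)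
    (hu : ∀ j, n+1 ≤ j → u j = 0) (hux : ∀ j, n+1 ≤ j → ux j = 0)
    (huy : ∀ j, n+1 ≤ j → uy j = 0)
    (hev : ∀ t : ℝ,
      2*L * (∑ i ∈ range (n+1), ux i * t^i)
      + 2*L * (∑ i ∈ range (n+1), uy i * t^i) * t
      + Lx * ((∑ i ∈ range (n+1), ((n:ℝ)-i) * u i * t^i)
          + (∑ i ∈ range (n+1), ((n:ℝ)-i) * u i * t^i) * t^2)
      + Ly * ((∑ i ∈ range (n+1), ((i:ℝ)+1) * u (i+1) * t^i)
          + (∑ i ∈ range (n+1), ((i:ℝ)+1) * u (i+1) * t^i) * t^2) = 0) :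
    (2*L*ux 0 + Lx*((n:ℝ)*u 0) + Ly*(u 1) = 0)
    ∧ (2*L*ux 1 + 2*L*uy 0 + Lx*(((n:ℝ)-1)*u 1) + Ly*(2*u 2) = 0)
    ∧ ∀ m : ℕ, 2*L*ux (m+2) + 2*L*uy (m+1)
        + Lx*(((n:ℝ)-(m+2))*u (m+2) + ((n:ℝ)-m)*u m)
        + Ly*(((m:ℝ)+3)*u (m+3) + ((m:ℝ)+1)*u (m+1)) = 0 := by
  set Px : ℝ[X] := ∑ i ∈ range (n+1), C (ux i) * X ^ i with hPx
  set Py : ℝ[X] := ∑ i ∈ range (n+1), C (uy i) * X ^ i with hPy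
  set D1 : ℝ[X] := ∑ i ∈ range (n+1), C (((n:ℝ)-i) * u i) * X ^ i with hD1
  set D2 : ℝ[X] := ∑ i ∈ range (n+1), C (((i:ℝ)+1) * u (i+1)) * X ^ i with hD2
  set Q : ℝ[X] := C (2*L) * Px + C (2*L) * (Py * X) + C Lx * (D1 + D1 * X^2)
      + C Ly * (D2 + D2 * X^2) with hQ
  have hQ0 : Q = 0 := by
    apply Polynomial.funext
    intro t
    rw [hQ]
    simp only [eval_add, eval_mul, eval_C, eval_X, eval_pow, eval_zero,
      hPx, hPy, hD1, hD2, eval_CXpow]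
    have := hev t
    linarith [hev t]
  have hcPx : ∀ m, Px.coeff m = ux m := fun m => coeff_CXpow _ _ hux m
  have hcPy : ∀ m, Py.coeff m = uy m := fun m => coeff_CXpow _ _ huy m
  have hcD1 : ∀ m, D1.coeff m = ((n:ℝ)-m) * u m := fun m =>
    coeff_CXpow _ _ (fun j hj => by rw [hu j hj, mul_zero]) m
  have hcD2 : ∀ m, D2.coeff m = ((m:ℝ)+1) * u (m+1) := fun m =>
    coeff_CXpow _ _ (fun j hj => by rw [hu (j+1) (by omega), mul_zero]) m
  have hc : ∀ m, Q.coeff m = 0 := fun m => by rw [hQ0]; simp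
  refine ⟨?_, ?_, ?_⟩
  · have h0 := hc 0
    rw [hQ] at h0
    simp only [coeff_add, coeff_C_mul, mul_coeff_zero, coeff_X_zero, mul_zero,
      coeff_mul_X_pow', hcPx, hcPy, hcD1, hcD2] at h0
    norm_num at h0
    linarith [h0]
  · have h1 := hc 1
    rw [hQ] at h1
    simp only [coeff_add, coeff_C_mul, coeff_mul_X, coeff_mul_X_pow',
      hcPx, hcPy, hcD1, hcD2] at h1
    norm_num at h1
    linarith [h1]
  · intro m
    have h2 := hc (m+2)
    rw [hQ] at h2
    have e1 : (Py * X).coeff (m+2) = uy (m+1) := by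
      rw [show m+2 = (m+1)+1 from rfl, coeff_mul_X, hcPy]
    simp only [coeff_add, coeff_C_mul, e1, coeff_mul_X_pow', hcPx, hcD1, hcD2] at h2
    norm_num at h2
    linarith [h2]

lemma combo1 (k' : ℕ) (L Lx Ly c₁ : ℝ) (A Ax Ay : ℕ → ℝ)
    (hE0 : 2*L*Ax 0 + Lx*((2*(k':ℝ)+2)*A 0) + Ly*(A 1) = 0)
    (hE : ∀ m, m+3 ≤ 2*(k'+1) → 2*L*Ax (m+2) + 2*L*Ay (m+1)
      + Lx*((2*((k':ℝ)+1)-((m:ℝ)+2))*A (m+2) + (2*((k':ℝ)+1)-(m:ℝ))*A m)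
      + Ly*(((m:ℝ)+3)*A (m+3) + ((m:ℝ)+1)*A (m+1)) = 0)
    (hK1 : ∑ j ∈ range (k'+1), (-1:ℝ)^j * A (2*j+1) = (-1)^k' * c₁) :
    (∑ j ∈ range (k'+1), (-1:ℝ)^j * (2*((k':ℝ)+1) - 2*(j:ℝ)) * Ax (2*j)) * L
    + (∑ j ∈ range (k'+1), (-1:ℝ)^j * (2*((k':ℝ)+1) - 2*(j:ℝ)) * A (2*j)) * Lx
    + (∑ j ∈ Icc 1 k', (-1:ℝ)^j * (2*((k':ℝ)+1) - 2*(j:ℝ)) * Ay (2*j-1)) * L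
    + ((∑ j ∈ Icc 1 k', (-1:ℝ)^j * (2*((k':ℝ)+1) - 2*(j:ℝ)) * A (2*j-1))
        + (-1)^k' * (2*((k':ℝ)+1)-1) * c₁) * Ly = 0 := by
  set S1 := ∑ j ∈ range k', (-1:ℝ)^j * (2*(k':ℝ) - 2*(j:ℝ)) * Ax (2*j+2) with hS1def
  set S2 := ∑ j ∈ range k', (-1:ℝ)^j * (2*(k':ℝ) - 2*(j:ℝ)) * A (2*j+2) with hS2def
  set S3 := ∑ j ∈ range k', (-1:ℝ)^j * (2*(k':ℝ) - 2*(j:ℝ)) * Ay (2*j+1) with hS3def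
  set S4 := ∑ j ∈ range k', (-1:ℝ)^j * (2*(k':ℝ) - 2*(j:ℝ)) * A (2*j+1) with hS4def
  set S5 := ∑ j ∈ range k', (-1:ℝ)^j * A (2*j+1) with hS5def
  set S6 := ∑ j ∈ range k', (-1:ℝ)^j * (2*(k':ℝ) - 2*(j:ℝ)) * (2*(k':ℝ) - 2*(j:ℝ)) * A (2*j+2) with hS6def
  set S7 := ∑ j ∈ range k', (-1:ℝ)^j * (2*(k':ℝ) - 2*(j:ℝ)) * (2*(k':ℝ) - 2*(j:ℝ)+2) * A (2*j) with hS7def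
  set S8 := ∑ j ∈ range k', (-1:ℝ)^j * (2*(k':ℝ) - 2*(j:ℝ)) * (2*(j:ℝ)+3) * A (2*j+3) with hS8def
  set S9 := ∑ j ∈ range k', (-1:ℝ)^j * (2*(k':ℝ) - 2*(j:ℝ)) * (2*(k':ℝ) - 2*(j:ℝ)-2) * A (2*j+2) with hS9def
  set S10 := ∑ j ∈ range k', (-1:ℝ)^j * (2*(k':ℝ) - 2*(j:ℝ)+2) * (2*(j:ℝ)+1) * A (2*j+1) with hS10def
  set S11 := ∑ j ∈ range k', (-1:ℝ)^j * (2*(k':ℝ) - 2*(j:ℝ)) * (2*(j:ℝ)+1) * A (2*j+1) with hS11def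
  set S12 := ∑ j ∈ range k', (-1:ℝ)^j * (2*(j:ℝ)+1) * A (2*j+1) with hS12def
  have hZ : 2*L*S1 + 2*L*S3 + Lx*(S6+S7) + Ly*(S8+S11) = 0 := by
    rw [hS1def, hS3def, hS6def, hS7def, hS8def, hS11def]
    have step : (2*L*(∑ j ∈ range k', (-1:ℝ)^j * (2*(k':ℝ) - 2*(j:ℝ)) * Ax (2*j+2))
        + 2*L*(∑ j ∈ range k', (-1:ℝ)^j * (2*(k':ℝ) - 2*(j:ℝ)) * Ay (2*j+1))
        + Lx*((∑ j ∈ range k', (-1:ℝ)^j * (2*(k':ℝ) - 2*(j:ℝ)) * (2*(k':ℝ) - 2*(j:ℝ)) * A (2*j+2))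
            + (∑ j ∈ range k', (-1:ℝ)^j * (2*(k':ℝ) - 2*(j:ℝ)) * (2*(k':ℝ) - 2*(j:ℝ)+2) * A (2*j)))
        + Ly*((∑ j ∈ range k', (-1:ℝ)^j * (2*(k':ℝ) - 2*(j:ℝ)) * (2*(j:ℝ)+3) * A (2*j+3))
            + (∑ j ∈ range k', (-1:ℝ)^j * (2*(k':ℝ) - 2*(j:ℝ)) * (2*(j:ℝ)+1) * A (2*j+1))))
        = ∑ j ∈ range k', ((-1:ℝ)^j * (2*(k':ℝ) - 2*(j:ℝ))) *
            (2*L*Ax (2*j+2) + 2*L*Ay (2*j+1)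
            + Lx*((2*((k':ℝ)+1)-((2*j:ℝ)+2))*A (2*j+2) + (2*((k':ℝ)+1)-(2*j:ℝ))*A (2*j))
            + Ly*(((2*j:ℝ)+3)*A (2*j+3) + ((2*j:ℝ)+1)*A (2*j+1))) := by
      simp only [mul_add, Finset.mul_sum, ← Finset.sum_add_distrib]
      refine Finset.sum_congr rfl fun j hj => by ring
    rw [step]
    apply Finset.sum_eq_zero
    intro j hj
    rw [mem_range] at hj
    have h := hE (2*j) (by omega)
    push_cast at h ⊢
    rw [mul_eq_zero]; right
    linear_combination h
  have hM1 : S6 - S9 = 2*S2 := by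
    rw [hS6def, hS9def, hS2def, ← Finset.sum_sub_distrib, Finset.mul_sum]
    exact Finset.sum_congr rfl fun j hj => by ring
  have hM2 : S11 - S10 = -(2*S12) := by
    rw [hS11def, hS10def, hS12def, ← Finset.sum_sub_distrib, Finset.mul_sum, ← Finset.sum_neg_distrib]
    exact Finset.sum_congr rfl fun j hj => by ring
  have hM3 : S4 + S12 = (2*(k':ℝ)+1)*S5 := by
    rw [hS4def, hS12def, hS5def, ← Finset.sum_add_distrib, Finset.mul_sum]
    exact Finset.sum_congr rfl fun j hj => by ring
  have hS7e : S7 = 2*(k':ℝ)*(2*(k':ℝ)+2)*A 0 - S9 := by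
    rw [hS7def, hS9def]
    have h1 := Finset.sum_range_succ
      (fun j => (-1:ℝ)^j * (2*(k':ℝ) - 2*(j:ℝ)) * (2*(k':ℝ) - 2*(j:ℝ)+2) * A (2*j)) k'
    have h2 := Finset.sum_range_succ'
      (fun j => (-1:ℝ)^j * (2*(k':ℝ) - 2*(j:ℝ)) * (2*(k':ℝ) - 2*(j:ℝ)+2) * A (2*j)) k'
    have h4 : ∑ j ∈ range k',
        ((-1:ℝ)^(j+1) * (2*(k':ℝ) - 2*((j+1:ℕ):ℝ)) * (2*(k':ℝ) - 2*((j+1:ℕ):ℝ)+2) * A (2*(j+1)))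
        = -(∑ j ∈ range k', (-1:ℝ)^j * (2*(k':ℝ) - 2*(j:ℝ)) * (2*(k':ℝ) - 2*(j:ℝ)-2) * A (2*j+2)) := by
      rw [← Finset.sum_neg_distrib]
      refine Finset.sum_congr rfl fun j hj => ?_
      rw [show 2*(j+1) = 2*j+2 from by omega]
      push_cast; ring
    linear_combination (-1 : ℝ)*h1 + h2 + h4
  have hS8e : S8 = (2*(k':ℝ)+2)*A 1 - S10 - 2*(-1:ℝ)^k'*(2*(k':ℝ)+1)*A (2*k'+1) := by
    rw [hS8def, hS10def]
    have h1 := Finset.sum_range_succ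
      (fun j => (-1:ℝ)^j * (2*(k':ℝ) - 2*(j:ℝ)+2) * (2*(j:ℝ)+1) * A (2*j+1)) k'
    have h2 := Finset.sum_range_succ'
      (fun j => (-1:ℝ)^j * (2*(k':ℝ) - 2*(j:ℝ)+2) * (2*(j:ℝ)+1) * A (2*j+1)) k'
    have h4 : ∑ j ∈ range k',
        ((-1:ℝ)^(j+1) * (2*(k':ℝ) - 2*((j+1:ℕ):ℝ)+2) * (2*((j+1:ℕ):ℝ)+1) * A (2*(j+1)+1))
        = -(∑ j ∈ range k', (-1:ℝ)^j * (2*(k':ℝ) - 2*(j:ℝ)) * (2*(j:ℝ)+3) * A (2*j+3)) := by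
      rw [← Finset.sum_neg_distrib]
      refine Finset.sum_congr rfl fun j hj => ?_
      rw [show 2*(j+1)+1 = 2*j+3 from by omega]
      push_cast; ring
    linear_combination h4 - h1 + h2
  have hK1s : S5 = (-1:ℝ)^k' * c₁ - (-1:ℝ)^k' * A (2*k'+1) := by
    rw [Finset.sum_range_succ] at hK1
    rw [hS5def]
    linarith [hK1]
  have hG1 : (∑ j ∈ range (k'+1), (-1:ℝ)^j * (2*((k':ℝ)+1) - 2*(j:ℝ)) * Ax (2*j))
      = (2*(k':ℝ)+2)*Ax 0 - S1 := by
    rw [hS1def]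
    have h2 := Finset.sum_range_succ'
      (fun j => (-1:ℝ)^j * (2*((k':ℝ)+1) - 2*(j:ℝ)) * Ax (2*j)) k'
    have h4 : ∑ j ∈ range k',
        ((-1:ℝ)^(j+1) * (2*((k':ℝ)+1) - 2*((j+1:ℕ):ℝ)) * Ax (2*(j+1)))
        = -(∑ j ∈ range k', (-1:ℝ)^j * (2*(k':ℝ) - 2*(j:ℝ)) * Ax (2*j+2)) := by
      rw [← Finset.sum_neg_distrib]
      refine Finset.sum_congr rfl fun j hj => ?_
      rw [show 2*(j+1) = 2*j+2 from by omega]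
      push_cast; ring
    linear_combination h2 + h4
  have hG2 : (∑ j ∈ range (k'+1), (-1:ℝ)^j * (2*((k':ℝ)+1) - 2*(j:ℝ)) * A (2*j))
      = (2*(k':ℝ)+2)*A 0 - S2 := by
    rw [hS2def]
    have h2 := Finset.sum_range_succ'
      (fun j => (-1:ℝ)^j * (2*((k':ℝ)+1) - 2*(j:ℝ)) * A (2*j)) k'
    have h4 : ∑ j ∈ range k',
        ((-1:ℝ)^(j+1) * (2*((k':ℝ)+1) - 2*((j+1:ℕ):ℝ)) * A (2*(j+1)))
        = -(∑ j ∈ range k', (-1:ℝ)^j * (2*(k':ℝ) - 2*(j:ℝ)) * A (2*j+2)) := by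
      rw [← Finset.sum_neg_distrib]
      refine Finset.sum_congr rfl fun j hj => ?_
      rw [show 2*(j+1) = 2*j+2 from by omega]
      push_cast; ring
    linear_combination h2 + h4
  have hG3 : (∑ j ∈ Icc 1 k', (-1:ℝ)^j * (2*((k':ℝ)+1) - 2*(j:ℝ)) * Ay (2*j-1)) = -S3 := by
    rw [hS3def, sum_Icc_shift, ← Finset.sum_neg_distrib]
    refine Finset.sum_congr rfl fun j hj => ?_
    rw [show 2*(j+1)-1 = 2*j+1 from by omega]
    push_cast; ring
  have hG4 : (∑ j ∈ Icc 1 k', (-1:ℝ)^j * (2*((k':ℝ)+1) - 2*(j:ℝ)) * A (2*j-1)) = -S4 := by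
    rw [hS4def, sum_Icc_shift, ← Finset.sum_neg_distrib]
    refine Finset.sum_congr rfl fun j hj => ?_
    rw [show 2*(j+1)-1 = 2*j+1 from by omega]
    push_cast; ring
  rw [hG1, hG2, hG3, hG4]
  linear_combination (-1/2 : ℝ)*hZ + ((k':ℝ)+1)*hE0 + (Lx/2)*hS7e + (Lx/2)*hM1
    + (Ly/2)*hS8e + (Ly/2)*hM2 - Ly*hM3 - (2*(k':ℝ)+1)*Ly*hK1s

lemma combo2 (k' : ℕ) (L Lx Ly c₁ c₂ : ℝ) (A Ax Ay : ℕ → ℝ)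
    (hE1 : 2*L*Ax 1 + 2*L*Ay 0 + Lx*((2*(k':ℝ)+1)*A 1) + Ly*(2*A 2) = 0)
    (hE : ∀ m, m+3 ≤ 2*(k'+1) → 2*L*Ax (m+2) + 2*L*Ay (m+1)
      + Lx*((2*((k':ℝ)+1)-((m:ℝ)+2))*A (m+2) + (2*((k':ℝ)+1)-(m:ℝ))*A m)
      + Ly*(((m:ℝ)+3)*A (m+3) + ((m:ℝ)+1)*A (m+1)) = 0)
    (hK1 : ∑ j ∈ range (k'+1), (-1:ℝ)^j * A (2*j+1) = (-1)^k' * c₁)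
    (hK1x : ∑ j ∈ range (k'+1), (-1:ℝ)^j * Ax (2*j+1) = 0)
    (hK2 : ∑ j ∈ range (k'+2), (-1:ℝ)^j * A (2*j) = (-1)^(k'+1) * c₂) :
    (∑ j ∈ Icc 1 k', (-1:ℝ)^(j+1) * (2*((k':ℝ)+1) - 2*(j:ℝ)) * Ax (2*j-1)) * L
    + ((∑ j ∈ Icc 1 k', (-1:ℝ)^(j+1) * (2*((k':ℝ)+1) - 2*(j:ℝ)) * A (2*j-1))
        + (-1)^k' * c₁) * Lx
    + (∑ j ∈ range (k'+1), (-1:ℝ)^j * (2*((k':ℝ)+1) - 2*(j:ℝ)) * Ay (2*j)) * L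
    + ((∑ j ∈ range (k'+1), (-1:ℝ)^j * (2*((k':ℝ)+1) - 2*(j:ℝ)) * A (2*j))
        + (-1)^k' * (2*((k':ℝ)+1)) * c₂) * Ly = 0 := by
  set U1 := ∑ j ∈ range k', (-1:ℝ)^j * (2*(k':ℝ) - 2*(j:ℝ)) * Ax (2*j+1) with hU1def
  set U2 := ∑ j ∈ range k', (-1:ℝ)^j * (2*(k':ℝ) - 2*(j:ℝ)) * A (2*j+1) with hU2def
  set U3 := ∑ j ∈ range k', (-1:ℝ)^j * (2*(k':ℝ) - 2*(j:ℝ)) * Ay (2*j+2) with hU3def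
  set U4 := ∑ j ∈ range k', (-1:ℝ)^j * (2*(k':ℝ) - 2*(j:ℝ)) * A (2*j+2) with hU4def
  set V1 := ∑ j ∈ range k', (-1:ℝ)^j * (2*(k':ℝ) - 2*(j:ℝ)) * Ax (2*j+3) with hV1def
  set V2 := ∑ j ∈ range k', (-1:ℝ)^j * (2*(k':ℝ) - 2*(j:ℝ)) * (2*(k':ℝ) - 2*(j:ℝ)-1) * A (2*j+3) with hV2def
  set V3 := ∑ j ∈ range k', (-1:ℝ)^j * (2*(k':ℝ) - 2*(j:ℝ)) * (2*(k':ℝ) - 2*(j:ℝ)+1) * A (2*j+1) with hV3def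
  set V4 := ∑ j ∈ range k', (-1:ℝ)^j * (2*(k':ℝ) - 2*(j:ℝ)) * (2*(j:ℝ)+4) * A (2*j+4) with hV4def
  set V5 := ∑ j ∈ range k', (-1:ℝ)^j * (2*(k':ℝ) - 2*(j:ℝ)) * (2*(j:ℝ)+2) * A (2*j+2) with hV5def
  set V1p := ∑ j ∈ range k', (-1:ℝ)^j * (2*(k':ℝ) - 2*(j:ℝ)+2) * Ax (2*j+1) with hV1pdef
  set V2p := ∑ j ∈ range k', (-1:ℝ)^j * (2*(k':ℝ) - 2*(j:ℝ)+2) * (2*(k':ℝ) - 2*(j:ℝ)+1) * A (2*j+1) with hV2pdef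
  set V4p := ∑ j ∈ range k', (-1:ℝ)^j * (2*(k':ℝ) - 2*(j:ℝ)+2) * (2*(j:ℝ)+2) * A (2*j+2) with hV4pdef
  set W1 := ∑ j ∈ range k', (-1:ℝ)^j * (2*(k':ℝ) - 2*(j:ℝ)+1) * A (2*j+1) with hW1def
  set W2 := ∑ j ∈ range k', (-1:ℝ)^j * (2*(j:ℝ)+2) * A (2*j+2) with hW2def
  set S5 := ∑ j ∈ range k', (-1:ℝ)^j * A (2*j+1) with hS5def
  set SX5 := ∑ j ∈ range k', (-1:ℝ)^j * Ax (2*j+1) with hSX5def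
  set S13 := ∑ j ∈ range k', (-1:ℝ)^j * A (2*j+2) with hS13def
  have hZ2 : 2*L*V1 + 2*L*U3 + Lx*(V2+V3) + Ly*(V4+V5) = 0 := by
    rw [hV1def, hU3def, hV2def, hV3def, hV4def, hV5def]
    have step : (2*L*(∑ j ∈ range k', (-1:ℝ)^j * (2*(k':ℝ) - 2*(j:ℝ)) * Ax (2*j+3))
        + 2*L*(∑ j ∈ range k', (-1:ℝ)^j * (2*(k':ℝ) - 2*(j:ℝ)) * Ay (2*j+2))
        + Lx*((∑ j ∈ range k', (-1:ℝ)^j * (2*(k':ℝ) - 2*(j:ℝ)) * (2*(k':ℝ) - 2*(j:ℝ)-1) * A (2*j+3))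
            + (∑ j ∈ range k', (-1:ℝ)^j * (2*(k':ℝ) - 2*(j:ℝ)) * (2*(k':ℝ) - 2*(j:ℝ)+1) * A (2*j+1)))
        + Ly*((∑ j ∈ range k', (-1:ℝ)^j * (2*(k':ℝ) - 2*(j:ℝ)) * (2*(j:ℝ)+4) * A (2*j+4))
            + (∑ j ∈ range k', (-1:ℝ)^j * (2*(k':ℝ) - 2*(j:ℝ)) * (2*(j:ℝ)+2) * A (2*j+2))))
        = ∑ j ∈ range k', ((-1:ℝ)^j * (2*(k':ℝ) - 2*(j:ℝ))) *
            (2*L*Ax (2*j+3) + 2*L*Ay (2*j+2)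
            + Lx*((2*((k':ℝ)+1)-((2*j+1:ℝ)+2))*A (2*j+3) + (2*((k':ℝ)+1)-(2*j+1:ℝ))*A (2*j+1))
            + Ly*(((2*j+1:ℝ)+3)*A (2*j+4) + ((2*j+1:ℝ)+1)*A (2*j+2))) := by
      simp only [mul_add, Finset.mul_sum, ← Finset.sum_add_distrib]
      refine Finset.sum_congr rfl fun j hj => by ring
    rw [step]
    apply Finset.sum_eq_zero
    intro j hj
    rw [mem_range] at hj
    have h := hE (2*j+1) (by omega)
    simp only [show 2*j+1+2 = 2*j+3 from by omega, show 2*j+1+1 = 2*j+2 from by omega,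
      show 2*j+1+3 = 2*j+4 from by omega] at h
    push_cast at h ⊢
    rw [mul_eq_zero]; right
    linear_combination h
  have hV1e : V1 = (2*(k':ℝ)+2)*Ax 1 - V1p - 2*(-1:ℝ)^k'*Ax (2*k'+1) := by
    rw [hV1def, hV1pdef]
    have h1 := Finset.sum_range_succ (fun j => (-1:ℝ)^j * (2*(k':ℝ) - 2*(j:ℝ)+2) * Ax (2*j+1)) k'
    have h2 := Finset.sum_range_succ' (fun j => (-1:ℝ)^j * (2*(k':ℝ) - 2*(j:ℝ)+2) * Ax (2*j+1)) k'
    have h4 : ∑ j ∈ range k',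
        ((-1:ℝ)^(j+1) * (2*(k':ℝ) - 2*((j+1:ℕ):ℝ)+2) * Ax (2*(j+1)+1))
        = -(∑ j ∈ range k', (-1:ℝ)^j * (2*(k':ℝ) - 2*(j:ℝ)) * Ax (2*j+3)) := by
      rw [← Finset.sum_neg_distrib]
      refine Finset.sum_congr rfl fun j hj => ?_
      rw [show 2*(j+1)+1 = 2*j+3 from by omega]
      push_cast; ring
    linear_combination h4 - h1 + h2
  have hV2e : V2 = (2*(k':ℝ)+2)*(2*(k':ℝ)+1)*A 1 - V2p - 2*(-1:ℝ)^k'*A (2*k'+1) := by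
    rw [hV2def, hV2pdef]
    have h1 := Finset.sum_range_succ (fun j => (-1:ℝ)^j * (2*(k':ℝ) - 2*(j:ℝ)+2) * (2*(k':ℝ) - 2*(j:ℝ)+1) * A (2*j+1)) k'
    have h2 := Finset.sum_range_succ' (fun j => (-1:ℝ)^j * (2*(k':ℝ) - 2*(j:ℝ)+2) * (2*(k':ℝ) - 2*(j:ℝ)+1) * A (2*j+1)) k'
    have h4 : ∑ j ∈ range k',
        ((-1:ℝ)^(j+1) * (2*(k':ℝ) - 2*((j+1:ℕ):ℝ)+2) * (2*(k':ℝ) - 2*((j+1:ℕ):ℝ)+1) * A (2*(j+1)+1))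
        = -(∑ j ∈ range k', (-1:ℝ)^j * (2*(k':ℝ) - 2*(j:ℝ)) * (2*(k':ℝ) - 2*(j:ℝ)-1) * A (2*j+3)) := by
      rw [← Finset.sum_neg_distrib]
      refine Finset.sum_congr rfl fun j hj => ?_
      rw [show 2*(j+1)+1 = 2*j+3 from by omega]
      push_cast; ring
    linear_combination h4 - h1 + h2
  have hV4e : V4 = 2*(2*(k':ℝ)+2)*A 2 - V4p - 2*(-1:ℝ)^k'*(2*(k':ℝ)+2)*A (2*k'+2) := by
    rw [hV4def, hV4pdef]
    have h1 := Finset.sum_range_succ (fun j => (-1:ℝ)^j * (2*(k':ℝ) - 2*(j:ℝ)+2) * (2*(j:ℝ)+2) * A (2*j+2)) k'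
    have h2 := Finset.sum_range_succ' (fun j => (-1:ℝ)^j * (2*(k':ℝ) - 2*(j:ℝ)+2) * (2*(j:ℝ)+2) * A (2*j+2)) k'
    have h4 : ∑ j ∈ range k',
        ((-1:ℝ)^(j+1) * (2*(k':ℝ) - 2*((j+1:ℕ):ℝ)+2) * (2*((j+1:ℕ):ℝ)+2) * A (2*(j+1)+2))
        = -(∑ j ∈ range k', (-1:ℝ)^j * (2*(k':ℝ) - 2*(j:ℝ)) * (2*(j:ℝ)+4) * A (2*j+4)) := by
      rw [← Finset.sum_neg_distrib]
      refine Finset.sum_congr rfl fun j hj => ?_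
      rw [show 2*(j+1)+2 = 2*j+4 from by omega]
      push_cast; ring
    linear_combination h4 - h1 + h2
  have hN1 : V3 - V2p = -(2*W1) := by
    rw [hV3def, hV2pdef, hW1def, ← Finset.sum_sub_distrib, Finset.mul_sum, ← Finset.sum_neg_distrib]
    exact Finset.sum_congr rfl fun j hj => by ring
  have hN2 : V5 - V4p = -(2*W2) := by
    rw [hV5def, hV4pdef, hW2def, ← Finset.sum_sub_distrib, Finset.mul_sum, ← Finset.sum_neg_distrib]
    exact Finset.sum_congr rfl fun j hj => by ring
  have hN4 : V1p - U1 = 2*SX5 := by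
    rw [hV1pdef, hU1def, hSX5def, ← Finset.sum_sub_distrib, Finset.mul_sum]
    exact Finset.sum_congr rfl fun j hj => by ring
  have hN3 : W1 - U2 = S5 := by
    rw [hW1def, hU2def, hS5def, ← Finset.sum_sub_distrib]
    exact Finset.sum_congr rfl fun j hj => by ring
  have hN5 : U4 + W2 = (2*(k':ℝ)+2)*S13 := by
    rw [hU4def, hW2def, hS13def, ← Finset.sum_add_distrib, Finset.mul_sum]
    exact Finset.sum_congr rfl fun j hj => by ring
  have hK1s : S5 = (-1:ℝ)^k' * c₁ - (-1:ℝ)^k' * A (2*k'+1) := by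
    rw [Finset.sum_range_succ] at hK1
    rw [hS5def]
    linarith [hK1]
  have hK1xs : SX5 = -((-1:ℝ)^k' * Ax (2*k'+1)) := by
    rw [Finset.sum_range_succ] at hK1x
    rw [hSX5def]
    linarith [hK1x]
  have hK2s : A 0 - S13 - (-1:ℝ)^k' * A (2*k'+2) = -((-1:ℝ)^k' * c₂) := by
    have g2 := Finset.sum_range_succ' (fun j => (-1:ℝ)^j * A (2*j)) (k'+1)
    have g1 := Finset.sum_range_succ (fun j => (-1:ℝ)^(j+1) * A (2*(j+1))) k'
    rw [show 2*(k'+1) = 2*k'+2 from by omega] at g1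
    have g4 : ∑ j ∈ range k', ((-1:ℝ)^(j+1) * A (2*(j+1)))
        = -(∑ j ∈ range k', (-1:ℝ)^j * A (2*j+2)) := by
      rw [← Finset.sum_neg_distrib]
      refine Finset.sum_congr rfl fun j hj => ?_
      rw [show 2*(j+1) = 2*j+2 from by omega]
      ring
    rw [hS13def]
    linear_combination hK2 - g2 - g1 - g4
  have hG1 : (∑ j ∈ Icc 1 k', (-1:ℝ)^(j+1) * (2*((k':ℝ)+1) - 2*(j:ℝ)) * Ax (2*j-1)) = U1 := by
    rw [hU1def, sum_Icc_shift]
    refine Finset.sum_congr rfl fun j hj => ?_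
    rw [show 2*(j+1)-1 = 2*j+1 from by omega]
    push_cast; ring
  have hG2 : (∑ j ∈ Icc 1 k', (-1:ℝ)^(j+1) * (2*((k':ℝ)+1) - 2*(j:ℝ)) * A (2*j-1)) = U2 := by
    rw [hU2def, sum_Icc_shift]
    refine Finset.sum_congr rfl fun j hj => ?_
    rw [show 2*(j+1)-1 = 2*j+1 from by omega]
    push_cast; ring
  have hG3 : (∑ j ∈ range (k'+1), (-1:ℝ)^j * (2*((k':ℝ)+1) - 2*(j:ℝ)) * Ay (2*j))
      = (2*(k':ℝ)+2)*Ay 0 - U3 := by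
    rw [hU3def]
    have h2 := Finset.sum_range_succ' (fun j => (-1:ℝ)^j * (2*((k':ℝ)+1) - 2*(j:ℝ)) * Ay (2*j)) k'
    have h4 : ∑ j ∈ range k',
        ((-1:ℝ)^(j+1) * (2*((k':ℝ)+1) - 2*((j+1:ℕ):ℝ)) * Ay (2*(j+1)))
        = -(∑ j ∈ range k', (-1:ℝ)^j * (2*(k':ℝ) - 2*(j:ℝ)) * Ay (2*j+2)) := by
      rw [← Finset.sum_neg_distrib]
      refine Finset.sum_congr rfl fun j hj => ?_
      rw [show 2*(j+1) = 2*j+2 from by omega]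
      push_cast; ring
    linear_combination h2 + h4
  have hG4 : (∑ j ∈ range (k'+1), (-1:ℝ)^j * (2*((k':ℝ)+1) - 2*(j:ℝ)) * A (2*j))
      = (2*(k':ℝ)+2)*A 0 - U4 := by
    rw [hU4def]
    have h2 := Finset.sum_range_succ' (fun j => (-1:ℝ)^j * (2*((k':ℝ)+1) - 2*(j:ℝ)) * A (2*j)) k'
    have h4 : ∑ j ∈ range k',
        ((-1:ℝ)^(j+1) * (2*((k':ℝ)+1) - 2*((j+1:ℕ):ℝ)) * A (2*(j+1)))
        = -(∑ j ∈ range k', (-1:ℝ)^j * (2*(k':ℝ) - 2*(j:ℝ)) * A (2*j+2)) := by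
      rw [← Finset.sum_neg_distrib]
      refine Finset.sum_congr rfl fun j hj => ?_
      rw [show 2*(j+1) = 2*j+2 from by omega]
      push_cast; ring
    linear_combination h2 + h4
  rw [hG1, hG2, hG3, hG4]
  linear_combination (-1/2 : ℝ)*hZ2 + ((k':ℝ)+1)*hE1 + L*hV1e - L*hN4 - 2*L*hK1xs
    + (Lx/2)*hV2e + (Lx/2)*hN1 - Lx*hN3 - Lx*hK1s
    + (Ly/2)*hV4e + (Ly/2)*hN2 - Ly*hN5 + (2*(k':ℝ)+2)*Ly*hK2s

end Aux

theorem conservation_laws_even_degree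
    (k : ℕ) (hk : 1 ≤ k) (n : ℕ) (hn : n = 2 * k)
    (Λ : ℝ × ℝ → ℝ) (a : ℕ → ℝ × ℝ → ℝ) (c₁ c₂ : ℝ)
    (hΛ : ContDiff ℝ (⊤ : ℕ∞) Λ) (hΛpos : ∀ z, 0 < Λ z)
    (ha : ∀ i, i ≤ n → ContDiff ℝ (⊤ : ℕ∞) (a i))
    (hKol1 : ∀ z, a (n - 1) z =
      c₁ + ∑ j ∈ Finset.Icc 1 (k - 1), (-1 : ℝ) ^ (j + 1) * a (n - 1 - 2 * j) z)
    (hKol2 : ∀ z, a n z =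
      c₂ + ∑ j ∈ Finset.Icc 1 k, (-1 : ℝ) ^ (j + 1) * a (n - 2 * j) z)
    (hHF : ∀ z, poisson
      (fun w => (w.2.1 ^ 2 + w.2.2 ^ 2) / (2 * Λ w.1))
      (fun w => ∑ i ∈ Finset.range (n + 1), a i w.1 * w.2.1 ^ (n - i) * w.2.2 ^ i) z = 0) :
    (∀ z, pdx (fun w =>
        (∑ j ∈ Finset.range k, (-1 : ℝ) ^ j * ((n : ℝ) - 2 * j) * a (2 * j) w) * Λ w) z
      + pdy (fun w =>
        ((∑ j ∈ Finset.Icc 1 (k - 1), (-1 : ℝ) ^ j * ((n : ℝ) - 2 * j) * a (2 * j - 1) w)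
          + (-1 : ℝ) ^ (k + 1) * ((n : ℝ) - 1) * c₁) * Λ w) z = 0)
    ∧ (∀ z, pdx (fun w =>
        ((∑ j ∈ Finset.Icc 1 (k - 1), (-1 : ℝ) ^ (j + 1) * ((n : ℝ) - 2 * j) * a (2 * j - 1) w)
          + (-1 : ℝ) ^ (k + 1) * c₁) * Λ w) z
      + pdy (fun w =>
        ((∑ j ∈ Finset.range k, (-1 : ℝ) ^ j * ((n : ℝ) - 2 * j) * a (2 * j) w)
          + (-1 : ℝ) ^ (k + 1) * (n : ℝ) * c₂) * Λ w) z = 0) := by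
  subst hn
  obtain ⟨k', rfl⟩ : ∃ k', k = k'+1 := ⟨k-1, by omega⟩
  -- Step 1: pointwise coefficient equations extracted from the Poisson bracket
  have hcoeff : ∀ x y : ℝ,
      (2*(Λ (x,y))*(pdx (a 0) (x,y)) + (pdx Λ (x,y))*((2*(k':ℝ)+2)*(a 0 (x,y)))
        + (pdy Λ (x,y))*(a 1 (x,y)) = 0)
      ∧ (2*(Λ (x,y))*(pdx (a 1) (x,y)) + 2*(Λ (x,y))*(pdy (a 0) (x,y))
        + (pdx Λ (x,y))*((2*(k':ℝ)+1)*(a 1 (x,y))) + (pdy Λ (x,y))*(2*(a 2 (x,y))) = 0)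
      ∧ ∀ m, m+3 ≤ 2*(k'+1) →
          2*(Λ (x,y))*(pdx (a (m+2)) (x,y)) + 2*(Λ (x,y))*(pdy (a (m+1)) (x,y))
          + (pdx Λ (x,y))*((2*((k':ℝ)+1)-((m:ℝ)+2))*(a (m+2) (x,y))
              + (2*((k':ℝ)+1)-(m:ℝ))*(a m (x,y)))
          + (pdy Λ (x,y))*(((m:ℝ)+3)*(a (m+3) (x,y)) + ((m:ℝ)+1)*(a (m+1) (x,y))) = 0 := by
    intro x y
    have hL : Λ (x,y) ≠ 0 := (hΛpos (x,y)).ne'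
    have hbr : ∀ t : ℝ,
        2*(Λ (x,y))*(∑ i ∈ range (2*(k'+1)+1), pdx (a i) (x,y) * t^i)
        + 2*(Λ (x,y))*(∑ i ∈ range (2*(k'+1)+1), pdy (a i) (x,y) * t^i)*t
        + (pdx Λ (x,y))*((∑ i ∈ range (2*(k'+1)+1), a i (x,y) * ((2*(k'+1)-i:ℕ):ℝ) * t^i)
            + (∑ i ∈ range (2*(k'+1)+1), a i (x,y) * ((2*(k'+1)-i:ℕ):ℝ) * t^i)*t^2)
        + (pdy Λ (x,y))*((∑ i ∈ range (2*(k'+1)+1), a i (x,y) * ((i:ℕ):ℝ) * t^(i-1))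
            + (∑ i ∈ range (2*(k'+1)+1), a i (x,y) * ((i:ℕ):ℝ) * t^(i-1))*t^2) = 0 := by
      intro t
      have hb := hHF ((x,y),(1,t))
      simp only [poisson, pq1, pp1, pq2, pp2, one_pow, mul_one] at hb
      have e1 : deriv (fun s => ∑ i ∈ range (2*(k'+1)+1), a i (s, y) * t ^ i) x
          = ∑ i ∈ range (2*(k'+1)+1), pdx (a i) (x,y) * t ^ i := by
        refine HasDerivAt.deriv (HasDerivAt.fun_sum fun i hi => ?_)
        exact (sliceX (ha i (by rw [mem_range] at hi; omega)) x y).mul_const _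
      have e2 : deriv (fun s => (s ^ 2 + t ^ 2) / (2 * Λ (x, y))) 1
          = 2 / (2 * Λ (x,y)) := by
        have h := ((hasDerivAt_pow 2 (1:ℝ)).add_const (t^2)).div_const (2 * Λ (x,y))
        have h2 := h.deriv
        simpa using h2
      have e3 : deriv (fun s => ∑ i ∈ range (2*(k'+1)+1), a i (x, y) * s ^ (2*(k'+1) - i) * t ^ i) 1
          = ∑ i ∈ range (2*(k'+1)+1), a i (x,y) * (((2*(k'+1)-i:ℕ):ℝ) * (1:ℝ) ^ (2*(k'+1)-i-1)) * t ^ i := by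
        refine HasDerivAt.deriv (HasDerivAt.fun_sum fun i hi => ?_)
        exact ((hasDerivAt_pow (2*(k'+1)-i) (1:ℝ)).const_mul (a i (x,y))).mul_const _
      have e4 : deriv (fun s => (1 + t ^ 2) / (2 * Λ (s, y))) x
          = (0 * (2 * Λ (x,y)) - (1 + t^2) * (2 * pdx Λ (x,y))) / (2 * Λ (x,y))^2 := by
        refine HasDerivAt.deriv ?_
        exact (hasDerivAt_const x (1 + t^2)).div ((sliceX hΛ x y).const_mul 2)
          (by positivity)
      have e5 : deriv (fun s => ∑ i ∈ range (2*(k'+1)+1), a i (x, s) * t ^ i) y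
          = ∑ i ∈ range (2*(k'+1)+1), pdy (a i) (x,y) * t ^ i := by
        refine HasDerivAt.deriv (HasDerivAt.fun_sum fun i hi => ?_)
        exact (sliceY (ha i (by rw [mem_range] at hi; omega)) x y).mul_const _
      have e6 : deriv (fun s => (1 + s ^ 2) / (2 * Λ (x, y))) t
          = 2 * t / (2 * Λ (x,y)) := by
        have h := ((hasDerivAt_pow 2 t).const_add 1).div_const (2 * Λ (x,y))
        have h2 := h.deriv
        simpa using h2
      have e7 : deriv (fun s => ∑ i ∈ range (2*(k'+1)+1), a i (x, y) * s ^ i) t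
          = ∑ i ∈ range (2*(k'+1)+1), a i (x,y) * (((i:ℕ):ℝ) * t ^ (i-1)) := by
        refine HasDerivAt.deriv (HasDerivAt.fun_sum fun i hi => ?_)
        exact (hasDerivAt_pow i t).const_mul (a i (x,y))
      have e8 : deriv (fun s => (1 + t ^ 2) / (2 * Λ (x, s))) y
          = (0 * (2 * Λ (x,y)) - (1 + t^2) * (2 * pdy Λ (x,y))) / (2 * Λ (x,y))^2 := by
        refine HasDerivAt.deriv ?_
        exact (hasDerivAt_const y (1 + t^2)).div ((sliceY hΛ x y).const_mul 2)
          (by positivity)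
      rw [e1, e2, e3, e4, e5, e6, e7, e8] at hb
      have e9 : ∑ i ∈ range (2*(k'+1)+1), a i (x,y) * (((2*(k'+1)-i:ℕ):ℝ) * (1:ℝ) ^ (2*(k'+1)-i-1)) * t ^ i
          = ∑ i ∈ range (2*(k'+1)+1), a i (x,y) * ((2*(k'+1)-i:ℕ):ℝ) * t ^ i := by
        refine Finset.sum_congr rfl fun i hi => by rw [one_pow, mul_one]
      have e10 : ∑ i ∈ range (2*(k'+1)+1), a i (x,y) * (((i:ℕ):ℝ) * t ^ (i-1))
          = ∑ i ∈ range (2*(k'+1)+1), a i (x,y) * ((i:ℕ):ℝ) * t ^ (i-1) := by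
        refine Finset.sum_congr rfl fun i hi => by ring
      rw [e9, e10] at hb
      field_simp at hb
      have h32 : (32:ℝ) * Λ (x,y)^4 ≠ 0 := by positivity
      refine mul_left_cancel₀ h32 ?_
      rw [mul_zero]
      linear_combination (32 * Λ (x,y)^4) * hb
    set u : ℕ → ℝ := fun i => if i ≤ 2*(k'+1) then a i (x,y) else 0 with hudef
    set ux : ℕ → ℝ := fun i => if i ≤ 2*(k'+1) then pdx (a i) (x,y) else 0 with huxdef
    set uy : ℕ → ℝ := fun i => if i ≤ 2*(k'+1) then pdy (a i) (x,y) else 0 with huydef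
    have hu_eq : ∀ i, i ≤ 2*(k'+1) → u i = a i (x,y) := fun i hi => by
      simp only [hudef]; rw [if_pos hi]
    have hux_eq : ∀ i, i ≤ 2*(k'+1) → ux i = pdx (a i) (x,y) := fun i hi => by
      simp only [huxdef]; rw [if_pos hi]
    have huy_eq : ∀ i, i ≤ 2*(k'+1) → uy i = pdy (a i) (x,y) := fun i hi => by
      simp only [huydef]; rw [if_pos hi]
    have hu0 : ∀ j, 2*(k'+1)+1 ≤ j → u j = 0 := fun j hj => by
      simp only [hudef]; rw [if_neg (by omega)]
    have hux0 : ∀ j, 2*(k'+1)+1 ≤ j → ux j = 0 := fun j hj => by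
      simp only [huxdef]; rw [if_neg (by omega)]
    have huy0 : ∀ j, 2*(k'+1)+1 ≤ j → uy j = 0 := fun j hj => by
      simp only [huydef]; rw [if_neg (by omega)]
    have hev : ∀ t : ℝ,
        2*(Λ (x,y)) * (∑ i ∈ range (2*(k'+1)+1), ux i * t^i)
        + 2*(Λ (x,y)) * (∑ i ∈ range (2*(k'+1)+1), uy i * t^i) * t
        + (pdx Λ (x,y)) * ((∑ i ∈ range (2*(k'+1)+1), (((2*(k'+1):ℕ):ℝ)-i) * u i * t^i)
            + (∑ i ∈ range (2*(k'+1)+1), (((2*(k'+1):ℕ):ℝ)-i) * u i * t^i) * t^2)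
        + (pdy Λ (x,y)) * ((∑ i ∈ range (2*(k'+1)+1), ((i:ℝ)+1) * u (i+1) * t^i)
            + (∑ i ∈ range (2*(k'+1)+1), ((i:ℝ)+1) * u (i+1) * t^i) * t^2) = 0 := by
      intro t
      have h := hbr t
      have cA : ∑ i ∈ range (2*(k'+1)+1), pdx (a i) (x,y) * t^i
          = ∑ i ∈ range (2*(k'+1)+1), ux i * t^i :=
        Finset.sum_congr rfl fun i hi => by
          rw [hux_eq i (by rw [mem_range] at hi; omega)]
      have cB : ∑ i ∈ range (2*(k'+1)+1), pdy (a i) (x,y) * t^i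
          = ∑ i ∈ range (2*(k'+1)+1), uy i * t^i :=
        Finset.sum_congr rfl fun i hi => by
          rw [huy_eq i (by rw [mem_range] at hi; omega)]
      have cC : ∑ i ∈ range (2*(k'+1)+1), a i (x,y) * ((2*(k'+1)-i:ℕ):ℝ) * t^i
          = ∑ i ∈ range (2*(k'+1)+1), (((2*(k'+1):ℕ):ℝ)-i) * u i * t^i :=
        Finset.sum_congr rfl fun i hi => by
          rw [mem_range] at hi
          rw [hu_eq i (by omega), Nat.cast_sub (by omega)]
          ring
      have cD1 : ∑ i ∈ range (2*(k'+1)+1), a i (x,y) * ((i:ℕ):ℝ) * t^(i-1)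
          = ∑ i ∈ range (2*(k'+1)+1), u i * (i:ℝ) * t^(i-1) :=
        Finset.sum_congr rfl fun i hi => by
          rw [hu_eq i (by rw [mem_range] at hi; omega)]
      have cD2 : ∑ i ∈ range (2*(k'+1)+1), u i * (i:ℝ) * t^(i-1)
          = ∑ i ∈ range (2*(k'+1)+1), ((i:ℝ)+1) * u (i+1) * t^i := by
        rw [Finset.sum_range_succ' (fun i => u i * (i:ℝ) * t^(i-1)) (2*(k'+1))]
        rw [Finset.sum_range_succ (fun i => ((i:ℝ)+1) * u (i+1) * t^i) (2*(k'+1))]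
        have hcg : ∀ i ∈ range (2*(k'+1)), u (i+1) * ((i+1:ℕ):ℝ) * t^(i+1-1)
            = ((i:ℝ)+1) * u (i+1) * t^i := fun i hi => by
          rw [show i+1-1 = i from rfl]; push_cast; ring
        rw [Finset.sum_congr rfl hcg, hu0 (2*(k'+1)+1) le_rfl]
        simp
      rw [cA, cB, cC, cD1, cD2] at h
      exact h
    obtain ⟨g0, g1, gm⟩ := coeffs_from_eval (2*(k'+1)) (Λ (x,y)) (pdx Λ (x,y)) (pdy Λ (x,y))
      u ux uy hu0 hux0 huy0 hev
    refine ⟨?_, ?_, ?_⟩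
    · rw [hu_eq 0 (by omega), hu_eq 1 (by omega), hux_eq 0 (by omega)] at g0
      push_cast at g0 ⊢
      linear_combination g0
    · rw [hu_eq 1 (by omega), hu_eq 2 (by omega), hux_eq 1 (by omega),
        huy_eq 0 (by omega)] at g1
      push_cast at g1 ⊢
      linear_combination g1
    · intro m hm
      have g := gm m
      rw [hu_eq m (by omega), hu_eq (m+1) (by omega), hu_eq (m+2) (by omega),
        hu_eq (m+3) (by omega), hux_eq (m+2) (by omega), huy_eq (m+1) (by omega)] at g
      push_cast at g ⊢
      linear_combination g
  -- Step 2: consequences of the Kolokoltsov relations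
  have hK1v : ∀ z : ℝ × ℝ, ∑ j ∈ range (k'+1), (-1:ℝ)^j * a (2*j+1) z = (-1)^k' * c₁ := by
    intro z
    have h := hKol1 z
    rw [show 2*(k'+1)-1 = 2*k'+1 from by omega, show k'+1-1 = k' from by omega] at h
    have h2 : ∑ j ∈ Icc 1 k', (-1:ℝ)^(j+1) * a (2*k'+1-2*j) z
        = ∑ j ∈ Icc 1 k', (-1:ℝ)^(j+1) * a (2*(k'-j)+1) z := by
      refine Finset.sum_congr rfl fun j hj => ?_
      rw [mem_Icc] at hj
      rw [show 2*k'+1-2*j = 2*(k'-j)+1 from by omega]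
    rw [h2] at h
    exact kol_core k' (fun j => a (2*j+1) z) c₁ h
  have hK2v : ∀ z : ℝ × ℝ, ∑ j ∈ range (k'+2), (-1:ℝ)^j * a (2*j) z = (-1)^(k'+1) * c₂ := by
    intro z
    have h := hKol2 z
    have h2 : ∑ j ∈ Icc 1 (k'+1), (-1:ℝ)^(j+1) * a (2*(k'+1)-2*j) z
        = ∑ j ∈ Icc 1 (k'+1), (-1:ℝ)^(j+1) * a (2*(k'+1-j)) z := by
      refine Finset.sum_congr rfl fun j hj => ?_
      rw [mem_Icc] at hj
      rw [show 2*(k'+1)-2*j = 2*(k'+1-j) from by omega]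
    rw [h2] at h
    have h3 := kol_core (k'+1) (fun j => a (2*j) z) c₂ h
    rw [show k'+1+1 = k'+2 from rfl] at h3
    exact h3
  have hK1x : ∀ x y : ℝ, ∑ j ∈ range (k'+1), (-1:ℝ)^j * pdx (a (2*j+1)) (x,y) = 0 := by
    intro x y
    have hLd : HasDerivAt (fun s => a (2*k'+1) (s,y)) (pdx (a (2*k'+1)) (x,y)) x :=
      sliceX (ha _ (by omega)) x y
    have hRd : HasDerivAt (fun s => a (2*k'+1) (s,y))
        (∑ j ∈ Icc 1 k', (-1:ℝ)^(j+1) * pdx (a (2*(k'-j)+1)) (x,y)) x := by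
      have hg : (fun s => a (2*k'+1) (s,y))
          = fun s => c₁ + ∑ j ∈ Icc 1 k', (-1:ℝ)^(j+1) * a (2*(k'-j)+1) (s,y) := by
        funext s
        have h := hKol1 (s,y)
        rw [show 2*(k'+1)-1 = 2*k'+1 from by omega, show k'+1-1 = k' from by omega] at h
        rw [h]
        congr 1
        refine Finset.sum_congr rfl fun j hj => ?_
        rw [mem_Icc] at hj
        rw [show 2*k'+1-2*j = 2*(k'-j)+1 from by omega]
      rw [hg]
      exact (HasDerivAt.fun_sum fun j hj =>
        (sliceX (ha (2*(k'-j)+1) (by rw [mem_Icc] at hj; omega)) x y).const_mul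
          ((-1:ℝ)^(j+1))).const_add c₁
    have huniq := hLd.unique hRd
    have h := kol_core k' (fun j => pdx (a (2*j+1)) (x,y)) 0 (by
      rw [zero_add]
      exact huniq)
    simpa using h
  -- Step 3: the two conservation laws
  constructor
  · intro z
    obtain ⟨x, y⟩ := z
    simp only [Nat.add_sub_cancel]
    have hd1 : pdx (fun w =>
        (∑ j ∈ range (k'+1), (-1:ℝ)^j * (((2*(k'+1):ℕ):ℝ) - 2*(j:ℝ)) * a (2*j) w) * Λ w) (x,y)
        = (∑ j ∈ range (k'+1), (-1:ℝ)^j * (((2*(k'+1):ℕ):ℝ) - 2*(j:ℝ)) * pdx (a (2*j)) (x,y)) * Λ (x,y)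
          + (∑ j ∈ range (k'+1), (-1:ℝ)^j * (((2*(k'+1):ℕ):ℝ) - 2*(j:ℝ)) * a (2*j) (x,y)) * pdx Λ (x,y) :=
      HasDerivAt.deriv ((HasDerivAt.fun_sum fun j hj =>
        (sliceX (ha (2*j) (by rw [mem_range] at hj; omega)) x y).const_mul
          ((-1:ℝ)^j * (((2*(k'+1):ℕ):ℝ) - 2*(j:ℝ)))).mul (sliceX hΛ x y))
    have hd2 : pdy (fun w =>
        ((∑ j ∈ Icc 1 k', (-1:ℝ)^j * (((2*(k'+1):ℕ):ℝ) - 2*(j:ℝ)) * a (2*j-1) w)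
          + (-1:ℝ)^(k'+1+1) * (((2*(k'+1):ℕ):ℝ) - 1) * c₁) * Λ w) (x,y)
        = (∑ j ∈ Icc 1 k', (-1:ℝ)^j * (((2*(k'+1):ℕ):ℝ) - 2*(j:ℝ)) * pdy (a (2*j-1)) (x,y)) * Λ (x,y)
          + ((∑ j ∈ Icc 1 k', (-1:ℝ)^j * (((2*(k'+1):ℕ):ℝ) - 2*(j:ℝ)) * a (2*j-1) (x,y))
            + (-1:ℝ)^(k'+1+1) * (((2*(k'+1):ℕ):ℝ) - 1) * c₁) * pdy Λ (x,y) :=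
      HasDerivAt.deriv (((HasDerivAt.fun_sum fun j hj =>
        (sliceY (ha (2*j-1) (by rw [mem_Icc] at hj; omega)) x y).const_mul
          ((-1:ℝ)^j * (((2*(k'+1):ℕ):ℝ) - 2*(j:ℝ)))).add_const
            ((-1:ℝ)^(k'+1+1) * (((2*(k'+1):ℕ):ℝ) - 1) * c₁)).mul (sliceY hΛ x y))
    rw [hd1, hd2]
    have hcmb := combo1 k' (Λ (x,y)) (pdx Λ (x,y)) (pdy Λ (x,y)) c₁
      (fun i => a i (x,y)) (fun i => pdx (a i) (x,y)) (fun i => pdy (a i) (x,y))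
      (hcoeff x y).1 (hcoeff x y).2.2 (hK1v (x,y))
    simp only [show ((-1:ℝ))^(k'+1+1) = (-1)^k' from npow_congr _ _ (by omega)]
    push_cast at hcmb ⊢
    linear_combination hcmb
  · intro z
    obtain ⟨x, y⟩ := z
    simp only [Nat.add_sub_cancel]
    have hd1 : pdx (fun w =>
        ((∑ j ∈ Icc 1 k', (-1:ℝ)^(j+1) * (((2*(k'+1):ℕ):ℝ) - 2*(j:ℝ)) * a (2*j-1) w)
          + (-1:ℝ)^(k'+1+1) * c₁) * Λ w) (x,y)
        = (∑ j ∈ Icc 1 k', (-1:ℝ)^(j+1) * (((2*(k'+1):ℕ):ℝ) - 2*(j:ℝ)) * pdx (a (2*j-1)) (x,y)) * Λ (x,y)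
          + ((∑ j ∈ Icc 1 k', (-1:ℝ)^(j+1) * (((2*(k'+1):ℕ):ℝ) - 2*(j:ℝ)) * a (2*j-1) (x,y))
            + (-1:ℝ)^(k'+1+1) * c₁) * pdx Λ (x,y) :=
      HasDerivAt.deriv (((HasDerivAt.fun_sum fun j hj =>
        (sliceX (ha (2*j-1) (by rw [mem_Icc] at hj; omega)) x y).const_mul
          ((-1:ℝ)^(j+1) * (((2*(k'+1):ℕ):ℝ) - 2*(j:ℝ)))).add_const
            ((-1:ℝ)^(k'+1+1) * c₁)).mul (sliceX hΛ x y))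
    have hd2 : pdy (fun w =>
        ((∑ j ∈ range (k'+1), (-1:ℝ)^j * (((2*(k'+1):ℕ):ℝ) - 2*(j:ℝ)) * a (2*j) w)
          + (-1:ℝ)^(k'+1+1) * ((2*(k'+1):ℕ):ℝ) * c₂) * Λ w) (x,y)
        = (∑ j ∈ range (k'+1), (-1:ℝ)^j * (((2*(k'+1):ℕ):ℝ) - 2*(j:ℝ)) * pdy (a (2*j)) (x,y)) * Λ (x,y)
          + ((∑ j ∈ range (k'+1), (-1:ℝ)^j * (((2*(k'+1):ℕ):ℝ) - 2*(j:ℝ)) * a (2*j) (x,y))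
            + (-1:ℝ)^(k'+1+1) * ((2*(k'+1):ℕ):ℝ) * c₂) * pdy Λ (x,y) :=
      HasDerivAt.deriv (((HasDerivAt.fun_sum fun j hj =>
        (sliceY (ha (2*j) (by rw [mem_range] at hj; omega)) x y).const_mul
          ((-1:ℝ)^j * (((2*(k'+1):ℕ):ℝ) - 2*(j:ℝ)))).add_const
            ((-1:ℝ)^(k'+1+1) * ((2*(k'+1):ℕ):ℝ) * c₂)).mul (sliceY hΛ x y))
    rw [hd1, hd2]
    have hcmb := combo2 k' (Λ (x,y)) (pdx Λ (x,y)) (pdy Λ (x,y)) c₁ c₂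
      (fun i => a i (x,y)) (fun i => pdx (a i) (x,y)) (fun i => pdy (a i) (x,y))
      (hcoeff x y).2.1 (hcoeff x y).2.2 (hK1v (x,y)) (hK1x x y) (hK2v (x,y))
    simp only [show ((-1:ℝ))^(k'+1+1) = (-1)^k' from npow_congr _ _ (by omega)]
    push_cast at hcmb ⊢
    linear_combination hcmb
end

section
/- Let n = 2k+1 with k ≥ 1 be an odd integer. Let Λ, a₀, a₁, …, aₙ : ℝ² → ℝ be smooth functions with Λ > 0 everywhere, and let c₁, c₂ ∈ ℝ be constants such that the Kolokoltsov relations hold: a_{n-1} = c₁ + Σ_{j=1}^{k} (−1)^{j+1} a_{n-1-2j} and a_n = c₂ + Σ_{j=1}^{k} (−1)^{j+1} a_{n-2j}. Suppose that the Poisson bracket {H, F} vanishes identically on ℝ² × ℝ², where H = (p₁² + p₂²)/(2Λ(x,y)) and F = Σ_{i=0}^{n} a_i(x,y) p₁^{n-i} p₂^{i}. Then the following two conservation laws hold identically on ℝ²: ∂_x[(Σ_{j=0}^{k-1} (−1)^j (n−1−2j) a_{2j} + (−1)^k c₁) Λ] + ∂_y[(Σ_{j=1}^{k} (−1)^j (n+1−2j)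 a_{2j-1} + (−1)^k n c₂) Λ] = 0, and ∂_x[(Σ_{j=1}^{k} (−1)^{j+1} (n+1−2j) a_{2j-1}) Λ] + ∂_y[(Σ_{j=0}^{k-1} (−1)^j (n−1−2j) a_{2j} + (−1)^{k+1} (n−1) c₁) Λ] = 0. -/
open Real Finset

lemma sum_pow_eq_zero {N : ℕ} {g : ℕ → ℝ}
    (h : ∀ t : ℝ, ∑ i ∈ Finset.range N, g i * t ^ i = 0) :
    ∀ i, i < N → g i = 0 := by
  intro i hi
  have hP : (∑ j ∈ Finset.range N, Polynomial.C (g j) * Polynomial.X ^ j : Polynomial ℝ) = 0 := by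
    apply Polynomial.funext
    intro t
    simpa [Polynomial.eval_finset_sum] using h t
  have := congrArg (fun p => Polynomial.coeff p i) hP
  simpa [Polynomial.finset_sum_coeff, Polynomial.coeff_C_mul, Polynomial.coeff_X_pow, hi] using this

lemma slicex {f : ℝ × ℝ → ℝ} (hf : ContDiff ℝ (⊤ : ℕ∞) f) (p : ℝ × ℝ) :
    HasDerivAt (fun s => f (s, p.2)) (pdx f p) p.1 := by
  have h1 : DifferentiableAt ℝ (fun s => f (s, p.2)) p.1 := by
    have : DifferentiableAt ℝ f (p.1, p.2) := (hf.differentiable (by simp)) _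
    exact this.comp p.1 (differentiableAt_id.prodMk (differentiableAt_const _))
  exact h1.hasDerivAt

lemma slicey {f : ℝ × ℝ → ℝ} (hf : ContDiff ℝ (⊤ : ℕ∞) f) (p : ℝ × ℝ) :
    HasDerivAt (fun s => f (p.1, s)) (pdy f p) p.2 := by
  have h1 : DifferentiableAt ℝ (fun s => f (p.1, s)) p.2 := by
    have : DifferentiableAt ℝ f (p.1, p.2) := (hf.differentiable (by simp)) _
    exact this.comp p.2 (DifferentiableAt.prodMk (differentiableAt_const _) differentiableAt_id)
  exact h1.hasDerivAt

lemma shift1 (N : ℕ) (g : ℕ → ℝ) (t : ℝ) :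
    ∑ i ∈ Finset.range (N+1), (if i = 0 then 0 else g (i-1)) * t ^ i
      = t * ∑ i ∈ Finset.range N, g i * t ^ i := by
  rw [Finset.sum_range_succ']
  simp [Finset.mul_sum, pow_succ]
  exact Finset.sum_congr rfl fun i _ => by ring

lemma shift2 (N : ℕ) (g : ℕ → ℝ) (t : ℝ) :
    ∑ i ∈ Finset.range (N+2), (if 2 ≤ i then g (i-2) else 0) * t ^ i
      = t^2 * ∑ i ∈ Finset.range N, g i * t ^ i := by
  rw [Finset.sum_range_succ', Finset.sum_range_succ']
  simp [Finset.mul_sum, pow_succ]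
  exact Finset.sum_congr rfl fun i _ => by ring

lemma tel1 (K : ℕ) (X : ℕ → ℝ) :
    ∑ j ∈ Finset.range (K+1), (-1:ℝ)^j * (2*(j:ℝ)+1) * (X (j+1) + X j)
      = (-1)^K * (2*(K:ℝ)+1) * X (K+1) - X 0 + ∑ j ∈ Finset.range (K+1), 2*(-1:ℝ)^j * X j := by
  induction K with
  | zero => simp; ring
  | succ K ih =>
      rw [Finset.sum_range_succ, ih,
        Finset.sum_range_succ (n := K+1) (f := fun j => 2*(-1:ℝ)^j * X j)]
      push_cast [pow_succ]
      ring

lemma tel2 (K : ℕ) (X : ℕ → ℝ) :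
    ∑ j ∈ Finset.range K, (-1:ℝ)^j * (2*(j:ℝ)+2) * (X (j+1) + X j)
      = -(-1:ℝ)^K * (2*(K:ℝ)) * X K + ∑ j ∈ Finset.range K, 2*(-1:ℝ)^j * X j := by
  induction K with
  | zero => simp
  | succ K ih =>
      rw [Finset.sum_range_succ, ih,
        Finset.sum_range_succ (n := K) (f := fun j => 2*(-1:ℝ)^j * X j)]
      push_cast [pow_succ]
      ring

lemma alt_sum (k : ℕ) (g : ℕ → ℝ) (c : ℝ)
    (h : g k = c + ∑ j ∈ Finset.Icc 1 k, (-1:ℝ)^(j+1) * g (k - j)) :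
    ∑ m ∈ Finset.range (k+1), (-1:ℝ)^m * g m = (-1)^k * c := by
  have hicc : ∑ j ∈ Finset.Icc 1 k, (-1:ℝ)^(j+1) * g (k - j)
      = ∑ m ∈ Finset.range k, (-1:ℝ)^(k-1-m) * g m := by
    rw [show Finset.Icc 1 k = Finset.Ico 1 (k+1) from by rw [Finset.Ico_add_one_right_eq_Icc],
      Finset.sum_Ico_eq_sum_range, ← Finset.sum_range_reflect]
    apply Finset.sum_congr (by rw [Nat.add_sub_cancel])
    intro i hi
    have hik : i < k := Finset.mem_range.mp hi
    have e1 : 1 + (k + 1 - 1 - 1 - i) + 1 = (k-1-i) + 2 := by omega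
    have e2 : k - (1 + (k + 1 - 1 - 1 - i)) = i := by omega
    rw [e1, e2, pow_add]
    norm_num
  rw [Finset.sum_range_succ, h, hicc, mul_add, Finset.mul_sum]
  have hz : ∑ m ∈ Finset.range k, ((-1:ℝ)^m * g m + (-1:ℝ)^k * ((-1:ℝ)^(k-1-m) * g m)) = 0 := by
    apply Finset.sum_eq_zero
    intro m hm
    have hmk : m < k := Finset.mem_range.mp hm
    have hpow : (-1:ℝ)^(k-1-m) * (-1:ℝ)^m = (-1:ℝ)^(k-1) := by
      rw [← pow_add]
      congr 1
      omega
    have hsq : (-1:ℝ)^m * (-1:ℝ)^m = 1 := by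
      rw [← pow_add, ← two_mul, pow_mul]
      norm_num
    have hkk : (-1:ℝ)^k * (-1:ℝ)^(k-1) = -1 := by
      rw [← pow_add]
      have : Odd (k + (k-1)) := ⟨k-1, by omega⟩
      exact this.neg_one_pow
    have h3 : (-1:ℝ)^(k-1-m) = (-1:ℝ)^(k-1) * (-1:ℝ)^m := by
      calc (-1:ℝ)^(k-1-m) = (-1:ℝ)^(k-1-m) * ((-1:ℝ)^m * (-1:ℝ)^m) := by rw [hsq]; ring
        _ = (-1:ℝ)^(k-1) * (-1:ℝ)^m := by rw [← mul_assoc, hpow]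
    rw [h3]
    linear_combination ((-1:ℝ)^m * g m) * hkk
  have hd := Finset.sum_add_distrib (s := Finset.range k)
    (f := fun m => (-1:ℝ)^m * g m)
    (g := fun m => (-1:ℝ)^k * ((-1:ℝ)^(k-1-m) * g m))
  linarith [hz, hd]

noncomputable def AAv (n : ℕ) (a : ℕ → ℝ × ℝ → ℝ) (z : ℝ × ℝ) (i : ℕ) : ℝ :=
  if i ≤ n then a i z else 0

noncomputable def AAx (n : ℕ) (a : ℕ → ℝ × ℝ → ℝ) (z : ℝ × ℝ) (i : ℕ) : ℝ :=
  if i ≤ n then pdx (a i) z else 0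

noncomputable def AAy (n : ℕ) (a : ℕ → ℝ × ℝ → ℝ) (z : ℝ × ℝ) (i : ℕ) : ℝ :=
  if i ≤ n then pdy (a i) z else 0

noncomputable def EE (n : ℕ) (Λ : ℝ × ℝ → ℝ) (a : ℕ → ℝ × ℝ → ℝ) (z : ℝ × ℝ) (i : ℕ) : ℝ :=
  2 * Λ z * AAx n a z i
  + (if i = 0 then 0 else 2 * Λ z * AAy n a z (i-1))
  + pdx Λ z * (((n:ℝ) - (i:ℝ)) * AAv n a z i)
  + (if 2 ≤ i then pdx Λ z * (((n:ℝ) - ((i-2:ℕ):ℝ)) * AAv n a z (i-2)) else 0)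
  + pdy Λ z * (((i:ℝ) + 1) * AAv n a z (i+1))
  + (if 2 ≤ i then pdy Λ z * ((((i-2:ℕ):ℝ) + 1) * AAv n a z ((i-2)+1)) else 0)

lemma EE_vanish (k n : ℕ) (hn : n = 2*k+1) (Λ : ℝ × ℝ → ℝ) (a : ℕ → ℝ × ℝ → ℝ)
    (hΛ : ContDiff ℝ (⊤ : ℕ∞) Λ) (hΛpos : ∀ z, 0 < Λ z)
    (ha : ∀ i, i ≤ n → ContDiff ℝ (⊤ : ℕ∞) (a i))
    (hHF : ∀ z, poisson
      (fun w => (w.2.1 ^ 2 + w.2.2 ^ 2) / (2 * Λ w.1))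
      (fun w => ∑ i ∈ Finset.range (n + 1), a i w.1 * w.2.1 ^ (n - i) * w.2.2 ^ i) z = 0)
    (z : ℝ × ℝ) : ∀ i, i < n + 3 → EE n Λ a z i = 0 := by
  have hpos := hΛpos z
  have hL : Λ z ≠ 0 := ne_of_gt hpos
  apply sum_pow_eq_zero
  intro t
  have hH := hHF (z, ((1:ℝ), t))
  simp only [poisson, pq1, pq2, pp1, pp2] at hH
  -- the eight derivatives
  have hd1 : HasDerivAt (fun s => ∑ x ∈ Finset.range (n+1), a x (s, z.2) * (1:ℝ)^(n-x) * t^x)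
      (∑ x ∈ Finset.range (n+1), pdx (a x) z * (1:ℝ)^(n-x) * t^x) z.1 :=
    HasDerivAt.fun_sum fun x hx =>
      ((slicex (ha x (Nat.lt_succ_iff.mp (Finset.mem_range.mp hx))) z).mul_const _).mul_const _
  have hd2 : HasDerivAt (fun s => (s^2 + t^2)/(2 * Λ z))
      ((((2:ℕ):ℝ) * (1:ℝ)^(2-1))/(2 * Λ z)) 1 :=
    ((hasDerivAt_pow 2 (1:ℝ)).add_const (t^2)).div_const (2 * Λ z)
  have hd3 : HasDerivAt (fun s => ∑ x ∈ Finset.range (n+1), a x z * s^(n-x) * t^x)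
      (∑ x ∈ Finset.range (n+1), a x z * (((n-x:ℕ):ℝ) * (1:ℝ)^(n-x-1)) * t^x) 1 :=
    HasDerivAt.fun_sum fun x hx => ((hasDerivAt_pow (n-x) (1:ℝ)).const_mul (a x z)).mul_const _
  have hd4 : HasDerivAt (fun s => ((1:ℝ)^2 + t^2)/(2 * Λ (s, z.2)))
      ((0 * (2 * Λ z) - ((1:ℝ)^2 + t^2) * (2 * pdx Λ z))/(2 * Λ z)^2) z.1 :=
    (hasDerivAt_const z.1 ((1:ℝ)^2 + t^2)).div ((slicex hΛ z).const_mul 2)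
      (by simpa using mul_ne_zero two_ne_zero hL)
  have hd5 : HasDerivAt (fun s => ∑ x ∈ Finset.range (n+1), a x (z.1, s) * (1:ℝ)^(n-x) * t^x)
      (∑ x ∈ Finset.range (n+1), pdy (a x) z * (1:ℝ)^(n-x) * t^x) z.2 :=
    HasDerivAt.fun_sum fun x hx =>
      ((slicey (ha x (Nat.lt_succ_iff.mp (Finset.mem_range.mp hx))) z).mul_const _).mul_const _
  have hd6 : HasDerivAt (fun s => ((1:ℝ)^2 + s^2)/(2 * Λ z))
      ((((2:ℕ):ℝ) * t^(2-1))/(2 * Λ z)) t :=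
    ((hasDerivAt_pow 2 t).const_add ((1:ℝ)^2)).div_const (2 * Λ z)
  have hd7 : HasDerivAt (fun s => ∑ x ∈ Finset.range (n+1), a x z * (1:ℝ)^(n-x) * s^x)
      (∑ x ∈ Finset.range (n+1), a x z * (1:ℝ)^(n-x) * (((x:ℕ):ℝ) * t^(x-1))) t :=
    HasDerivAt.fun_sum fun x hx => (hasDerivAt_pow x t).const_mul (a x z * (1:ℝ)^(n-x))
  have hd8 : HasDerivAt (fun s => ((1:ℝ)^2 + t^2)/(2 * Λ (z.1, s)))
      ((0 * (2 * Λ z) - ((1:ℝ)^2 + t^2) * (2 * pdy Λ z))/(2 * Λ z)^2) z.2 :=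
    (hasDerivAt_const z.2 ((1:ℝ)^2 + t^2)).div ((slicey hΛ z).const_mul 2)
      (by simpa using mul_ne_zero two_ne_zero hL)
  rw [hd1.deriv, hd2.deriv, hd3.deriv, hd4.deriv, hd5.deriv, hd6.deriv, hd7.deriv, hd8.deriv] at hH
  -- clean up the four sums
  have c1 : ∑ x ∈ Finset.range (n+1), pdx (a x) z * (1:ℝ)^(n-x) * t^x
      = ∑ x ∈ Finset.range (n+1), pdx (a x) z * t^x :=
    Finset.sum_congr rfl fun x _ => by simp only [one_pow, mul_one]
  have c2 : ∑ x ∈ Finset.range (n+1), pdy (a x) z * (1:ℝ)^(n-x) * t^x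
      = ∑ x ∈ Finset.range (n+1), pdy (a x) z * t^x :=
    Finset.sum_congr rfl fun x _ => by simp only [one_pow, mul_one]
  have c3 : ∑ x ∈ Finset.range (n+1), a x z * (((n-x:ℕ):ℝ) * (1:ℝ)^(n-x-1)) * t^x
      = ∑ x ∈ Finset.range (n+1), ((n:ℝ) - (x:ℝ)) * a x z * t^x :=
    Finset.sum_congr rfl fun x hx => by
      rw [Nat.cast_sub (Nat.lt_succ_iff.mp (Finset.mem_range.mp hx)), one_pow, mul_one]
      ring
  have c4 : ∑ x ∈ Finset.range (n+1), a x z * (1:ℝ)^(n-x) * (((x:ℕ):ℝ) * t^(x-1))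
      = ∑ x ∈ Finset.range (n+1), (x:ℝ) * a x z * t^(x-1) :=
    Finset.sum_congr rfl fun x _ => by rw [one_pow, mul_one]; ring
  rw [c1, c2, c3, c4] at hH
  -- cleared form
  have key2 : 2 * Λ z * (∑ x ∈ Finset.range (n+1), pdx (a x) z * t^x)
      + 2 * Λ z * t * (∑ x ∈ Finset.range (n+1), pdy (a x) z * t^x)
      + (1 + t^2) * pdx Λ z * (∑ x ∈ Finset.range (n+1), ((n:ℝ) - (x:ℝ)) * a x z * t^x)
      + (1 + t^2) * pdy Λ z * (∑ x ∈ Finset.range (n+1), (x:ℝ) * a x z * t^(x-1)) = 0 := by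
    have h2 := hH
    field_simp at h2
    have h3 : (32:ℝ) * (Λ z)^4 * (2 * Λ z * (∑ x ∈ Finset.range (n+1), pdx (a x) z * t^x)
      + 2 * Λ z * t * (∑ x ∈ Finset.range (n+1), pdy (a x) z * t^x)
      + (1 + t^2) * pdx Λ z * (∑ x ∈ Finset.range (n+1), ((n:ℝ) - (x:ℝ)) * a x z * t^x)
      + (1 + t^2) * pdy Λ z * (∑ x ∈ Finset.range (n+1), (x:ℝ) * a x z * t^(x-1))) = 0 := by
      linear_combination (32 * Λ z ^ 4) * h2
    have h4 : (32:ℝ) * (Λ z)^4 ≠ 0 := by positivity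
    exact (mul_eq_zero.mp h3).resolve_left h4
  -- decompose the target sum into six streams
  have hsplit : ∑ i ∈ Finset.range (n+3), EE n Λ a z i * t^i
      = ∑ i ∈ Finset.range (n+3), (2 * Λ z * AAx n a z i) * t^i
      + ∑ i ∈ Finset.range (n+3), (if i = 0 then 0 else 2 * Λ z * AAy n a z (i-1)) * t^i
      + ∑ i ∈ Finset.range (n+3), (pdx Λ z * (((n:ℝ) - (i:ℝ)) * AAv n a z i)) * t^i
      + ∑ i ∈ Finset.range (n+3), (if 2 ≤ i then pdx Λ z * (((n:ℝ) - ((i-2:ℕ):ℝ)) * AAv n a z (i-2)) else 0) * t^i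
      + ∑ i ∈ Finset.range (n+3), (pdy Λ z * (((i:ℝ) + 1) * AAv n a z (i+1))) * t^i
      + ∑ i ∈ Finset.range (n+3), (if 2 ≤ i then pdy Λ z * ((((i-2:ℕ):ℝ) + 1) * AAv n a z ((i-2)+1)) else 0) * t^i := by
    rw [← Finset.sum_add_distrib, ← Finset.sum_add_distrib, ← Finset.sum_add_distrib,
      ← Finset.sum_add_distrib, ← Finset.sum_add_distrib]
    exact Finset.sum_congr rfl fun i _ => by rw [EE]; ring
  have st1 : ∑ i ∈ Finset.range (n+3), (2 * Λ z * AAx n a z i) * t^i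
      = 2 * Λ z * ∑ x ∈ Finset.range (n+1), pdx (a x) z * t^x := by
    rw [← Finset.sum_subset (Finset.range_subset_range.mpr (show n+1 ≤ n+3 by omega))
      (fun i _ hi => by
        rw [AAx, if_neg (by simp only [Finset.mem_range] at hi ⊢; omega)]; ring)]
    rw [Finset.mul_sum]
    exact Finset.sum_congr rfl fun i hi => by
      rw [AAx, if_pos (Nat.lt_succ_iff.mp (Finset.mem_range.mp hi))]; ring
  have st2 : ∑ i ∈ Finset.range (n+3), (if i = 0 then 0 else 2 * Λ z * AAy n a z (i-1)) * t^i
      = 2 * Λ z * t * ∑ x ∈ Finset.range (n+1), pdy (a x) z * t^x := by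
    have hs := shift1 (n+2) (fun m => 2 * Λ z * AAy n a z m) t
    norm_num at hs
    simp only [ite_mul, zero_mul]
    rw [show n+3 = n+2+1 from by omega, hs,
      ← Finset.sum_subset (Finset.range_subset_range.mpr (show n+1 ≤ n+2 by omega))
      (fun i _ hi => by
        rw [AAy, if_neg (by simp only [Finset.mem_range] at hi ⊢; omega)]; ring)]
    rw [Finset.mul_sum, Finset.mul_sum]
    exact Finset.sum_congr rfl fun i hi => by
      rw [AAy, if_pos (Nat.lt_succ_iff.mp (Finset.mem_range.mp hi))]; ring
  have st3 : ∑ i ∈ Finset.range (n+3), (pdx Λ z * (((n:ℝ) - (i:ℝ)) * AAv n a z i)) * t^i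
      = pdx Λ z * ∑ x ∈ Finset.range (n+1), ((n:ℝ) - (x:ℝ)) * a x z * t^x := by
    rw [← Finset.sum_subset (Finset.range_subset_range.mpr (show n+1 ≤ n+3 by omega))
      (fun i _ hi => by
        rw [AAv, if_neg (by simp only [Finset.mem_range] at hi ⊢; omega)]; ring)]
    rw [Finset.mul_sum]
    exact Finset.sum_congr rfl fun i hi => by
      rw [AAv, if_pos (Nat.lt_succ_iff.mp (Finset.mem_range.mp hi))]; ring
  have st4 : ∑ i ∈ Finset.range (n+3), (if 2 ≤ i then pdx Λ z * (((n:ℝ) - ((i-2:ℕ):ℝ)) * AAv n a z (i-2)) else 0) * t^i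
      = t^2 * (pdx Λ z * ∑ x ∈ Finset.range (n+1), ((n:ℝ) - (x:ℝ)) * a x z * t^x) := by
    have hs := shift2 (n+1) (fun m => pdx Λ z * (((n:ℝ) - ((m:ℕ):ℝ)) * AAv n a z m)) t
    norm_num at hs
    simp only [ite_mul, zero_mul]
    rw [show n+3 = n+1+2 from by omega, hs]
    refine congrArg _ ?_
    rw [Finset.mul_sum]
    exact Finset.sum_congr rfl fun i hi => by
      rw [AAv, if_pos (Nat.lt_succ_iff.mp (Finset.mem_range.mp hi))]; ring
  have base4 : ∑ x ∈ Finset.range (n+1), (x:ℝ) * a x z * t^(x-1)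
      = ∑ i ∈ Finset.range n, ((i:ℝ) + 1) * a (i+1) z * t^i := by
    rw [Finset.sum_range_succ']
    simp only [Nat.add_sub_cancel, Nat.cast_zero, zero_mul, add_zero]
    exact Finset.sum_congr rfl fun i _ => by push_cast; ring
  have st5 : ∑ i ∈ Finset.range (n+3), (pdy Λ z * (((i:ℝ) + 1) * AAv n a z (i+1))) * t^i
      = pdy Λ z * ∑ x ∈ Finset.range (n+1), (x:ℝ) * a x z * t^(x-1) := by
    rw [base4, ← Finset.sum_subset (Finset.range_subset_range.mpr (show n ≤ n+3 by omega))
      (fun i _ hi => by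
        rw [AAv, if_neg (by simp only [Finset.mem_range] at hi ⊢; omega)]; ring)]
    rw [Finset.mul_sum]
    exact Finset.sum_congr rfl fun i hi => by
      rw [AAv, if_pos (by have := Finset.mem_range.mp hi; omega)]; ring
  have st6 : ∑ i ∈ Finset.range (n+3), (if 2 ≤ i then pdy Λ z * ((((i-2:ℕ):ℝ) + 1) * AAv n a z ((i-2)+1)) else 0) * t^i
      = t^2 * (pdy Λ z * ∑ x ∈ Finset.range (n+1), (x:ℝ) * a x z * t^(x-1)) := by
    have hs := shift2 (n+1) (fun m => pdy Λ z * ((((m:ℕ):ℝ) + 1) * AAv n a z (m+1))) t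
    norm_num at hs
    simp only [ite_mul, zero_mul]
    rw [show n+3 = n+1+2 from by omega, hs]
    refine congrArg _ ?_
    rw [base4, ← Finset.sum_subset (Finset.range_subset_range.mpr (show n ≤ n+1 by omega))
      (fun i _ hi => by
        rw [AAv, if_neg (by simp only [Finset.mem_range] at hi ⊢; omega)]; ring)]
    rw [Finset.mul_sum]
    exact Finset.sum_congr rfl fun i hi => by
      rw [AAv, if_pos (by have := Finset.mem_range.mp hi; omega)]; ring
  rw [hsplit, st1, st2, st3, st4, st5, st6]
  linear_combination key2

lemma law1_alg (k : ℕ) (ν L Lx Ly : ℝ) (Ev Od Ex Oy : ℕ → ℝ)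
    (hE0 : 2*L*Ex 0 + Lx*(ν*Ev 0) + Ly*Od 0 = 0)
    (hE : ∀ j ∈ Finset.range (k+1), 2*L*Ex (j+1) + 2*L*Oy j
        + Lx*((ν-2*(j:ℝ)-2)*Ev (j+1)) + Lx*((ν-2*(j:ℝ))*Ev j)
        + Ly*((2*(j:ℝ)+3)*Od (j+1)) + Ly*((2*(j:ℝ)+1)*Od j) = 0)
    (hK : ∑ j ∈ Finset.range (k+1), (-1:ℝ)^j * Ex j = 0)
    (h1 : Ex (k+1) = 0) (h2 : Ev (k+1) = 0) (h3 : Od (k+1) = 0) :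
    ∑ j ∈ Finset.range (k+1), (-1:ℝ)^j * (ν - 2*(j:ℝ)) * (L * Ex j + Lx * Ev j)
    + ∑ j ∈ Finset.range (k+1), (-1:ℝ)^j * (2*(j:ℝ)+1) * (L * Oy j + Ly * Od j) = 0 := by
  have hEsum : ∑ j ∈ Finset.range (k+1), (-1:ℝ)^j * (2*(j:ℝ)+1) * (2*L*Ex (j+1) + 2*L*Oy j
        + Lx*((ν-2*(j:ℝ)-2)*Ev (j+1)) + Lx*((ν-2*(j:ℝ))*Ev j)
        + Ly*((2*(j:ℝ)+3)*Od (j+1)) + Ly*((2*(j:ℝ)+1)*Od j)) = 0 :=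
    Finset.sum_eq_zero fun j hj => by rw [hE j hj, mul_zero]
  have hES : ∑ j ∈ Finset.range (k+1), (-1:ℝ)^j * (2*(j:ℝ)+1) * (2*L*Ex (j+1) + 2*L*Oy j
        + Lx*((ν-2*(j:ℝ)-2)*Ev (j+1)) + Lx*((ν-2*(j:ℝ))*Ev j)
        + Ly*((2*(j:ℝ)+3)*Od (j+1)) + Ly*((2*(j:ℝ)+1)*Od j))
      = 2*(∑ j ∈ Finset.range (k+1), (-1:ℝ)^j * (2*(j:ℝ)+1) * (L * Ex (j+1)))
      + 2*(∑ j ∈ Finset.range (k+1), (-1:ℝ)^j * (2*(j:ℝ)+1) * (L * Oy j))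
      + (∑ j ∈ Finset.range (k+1), (-1:ℝ)^j * (2*(j:ℝ)+1) * (Lx*((ν-2*(j:ℝ)-2)*Ev (j+1))))
      + (∑ j ∈ Finset.range (k+1), (-1:ℝ)^j * (2*(j:ℝ)+1) * (Lx*((ν-2*(j:ℝ))*Ev j)))
      + (∑ j ∈ Finset.range (k+1), (-1:ℝ)^j * (2*(j:ℝ)+1) * (Ly*((2*(j:ℝ)+3)*Od (j+1))))
      + (∑ j ∈ Finset.range (k+1), (-1:ℝ)^j * (2*(j:ℝ)+1) * (Ly*((2*(j:ℝ)+1)*Od j))) := by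
    rw [Finset.mul_sum, Finset.mul_sum, ← Finset.sum_add_distrib, ← Finset.sum_add_distrib,
      ← Finset.sum_add_distrib, ← Finset.sum_add_distrib, ← Finset.sum_add_distrib]
    exact Finset.sum_congr rfl fun j _ => by ring
  rw [hES] at hEsum
  -- telescoping identities
  have tU := tel1 k (fun m => L * Ex m)
  have hA12 : ∑ j ∈ Finset.range (k+1), (-1:ℝ)^j * (2*(j:ℝ)+1) * (L * Ex (j+1) + L * Ex j)
      = (∑ j ∈ Finset.range (k+1), (-1:ℝ)^j * (2*(j:ℝ)+1) * (L * Ex (j+1)))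
      + (∑ j ∈ Finset.range (k+1), (-1:ℝ)^j * (2*(j:ℝ)+1) * (L * Ex j)) := by
    rw [← Finset.sum_add_distrib]
    exact Finset.sum_congr rfl fun j _ => by ring
  have hB1 : ∑ j ∈ Finset.range (k+1), 2*(-1:ℝ)^j * (L * Ex j)
      = 2 * ∑ j ∈ Finset.range (k+1), (-1:ℝ)^j * (L * Ex j) := by
    rw [Finset.mul_sum]
    exact Finset.sum_congr rfl fun j _ => by ring
  rw [hA12, hB1, h1] at tU
  have tW := tel1 k (fun m => Lx * ((ν - 2*(m:ℝ)) * Ev m))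
  have hA45 : ∑ j ∈ Finset.range (k+1), (-1:ℝ)^j * (2*(j:ℝ)+1)
        * (Lx * ((ν - 2*((j+1:ℕ):ℝ)) * Ev (j+1)) + Lx * ((ν - 2*(j:ℝ)) * Ev j))
      = (∑ j ∈ Finset.range (k+1), (-1:ℝ)^j * (2*(j:ℝ)+1) * (Lx*((ν-2*(j:ℝ)-2)*Ev (j+1))))
      + (∑ j ∈ Finset.range (k+1), (-1:ℝ)^j * (2*(j:ℝ)+1) * (Lx*((ν-2*(j:ℝ))*Ev j))) := by
    rw [← Finset.sum_add_distrib]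
    exact Finset.sum_congr rfl fun j _ => by push_cast; ring
  have hB2 : ∑ j ∈ Finset.range (k+1), 2*(-1:ℝ)^j * (Lx * ((ν - 2*(j:ℝ)) * Ev j))
      = 2 * ∑ j ∈ Finset.range (k+1), (-1:ℝ)^j * (Lx*((ν-2*(j:ℝ))*Ev j)) := by
    rw [Finset.mul_sum]
    exact Finset.sum_congr rfl fun j _ => by ring
  rw [hA45, hB2, h2] at tW
  have tR := tel1 k (fun m => Ly * ((2*(m:ℝ)+1) * Od m))
  have hA67 : ∑ j ∈ Finset.range (k+1), (-1:ℝ)^j * (2*(j:ℝ)+1)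
        * (Ly * ((2*((j+1:ℕ):ℝ)+1) * Od (j+1)) + Ly * ((2*(j:ℝ)+1) * Od j))
      = (∑ j ∈ Finset.range (k+1), (-1:ℝ)^j * (2*(j:ℝ)+1) * (Ly*((2*(j:ℝ)+3)*Od (j+1))))
      + (∑ j ∈ Finset.range (k+1), (-1:ℝ)^j * (2*(j:ℝ)+1) * (Ly*((2*(j:ℝ)+1)*Od j))) := by
    rw [← Finset.sum_add_distrib]
    exact Finset.sum_congr rfl fun j _ => by push_cast; ring
  have hB3 : ∑ j ∈ Finset.range (k+1), 2*(-1:ℝ)^j * (Ly * ((2*(j:ℝ)+1) * Od j))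
      = 2 * ∑ j ∈ Finset.range (k+1), (-1:ℝ)^j * (Ly*((2*(j:ℝ)+1)*Od j)) := by
    rw [Finset.mul_sum]
    exact Finset.sum_congr rfl fun j _ => by ring
  rw [hA67, hB3, h3] at tR
  -- goal conversion
  have hG1a : ∑ j ∈ Finset.range (k+1), (-1:ℝ)^j * (ν - 2*(j:ℝ)) * (L * Ex j + Lx * Ev j)
      = (ν+1) * (∑ j ∈ Finset.range (k+1), (-1:ℝ)^j * (L * Ex j))
      - (∑ j ∈ Finset.range (k+1), (-1:ℝ)^j * (2*(j:ℝ)+1) * (L * Ex j))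
      + (∑ j ∈ Finset.range (k+1), (-1:ℝ)^j * (Lx*((ν-2*(j:ℝ))*Ev j))) := by
    rw [Finset.mul_sum, ← Finset.sum_sub_distrib, ← Finset.sum_add_distrib]
    exact Finset.sum_congr rfl fun j _ => by ring
  have hG2a : ∑ j ∈ Finset.range (k+1), (-1:ℝ)^j * (2*(j:ℝ)+1) * (L * Oy j + Ly * Od j)
      = (∑ j ∈ Finset.range (k+1), (-1:ℝ)^j * (2*(j:ℝ)+1) * (L * Oy j))
      + (∑ j ∈ Finset.range (k+1), (-1:ℝ)^j * (Ly*((2*(j:ℝ)+1)*Od j))) := by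
    rw [← Finset.sum_add_distrib]
    exact Finset.sum_congr rfl fun j _ => by ring
  have hCO1 : ∑ j ∈ Finset.range (k+1), (-1:ℝ)^j * (L * Ex j)
      = L * ∑ j ∈ Finset.range (k+1), (-1:ℝ)^j * Ex j := by
    rw [Finset.mul_sum]
    exact Finset.sum_congr rfl fun j _ => by ring
  linear_combination hG1a + hG2a + (1/2)*hEsum - tU - (1/2)*tW - (1/2)*tR + (1/2)*hE0
    + ((ν-1)*L)*hK + (ν-1)*hCO1

lemma law2_alg (k : ℕ) (ν L Lx Ly : ℝ) (Ev Od Ox Ey : ℕ → ℝ)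
    (hν : ν = 2*(k:ℝ)+1)
    (hE : ∀ j ∈ Finset.range k, 2*L*Ox (j+1) + 2*L*Ey (j+1)
        + Lx*((ν-2*(j:ℝ)-3)*Od (j+1)) + Lx*((ν-2*(j:ℝ)-1)*Od j)
        + Ly*((2*(j:ℝ)+4)*Ev (j+2)) + Ly*((2*(j:ℝ)+2)*Ev (j+1)) = 0)
    (hK : ∑ j ∈ Finset.range (k+1), (-1:ℝ)^j * Ox j = 0)
    (h2 : Ev (k+1) = 0) :
    ∑ j ∈ Finset.range (k+1), (-1:ℝ)^j * (ν - 1 - 2*(j:ℝ)) * (L * Ox j + Lx * Od j)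
    + ∑ j ∈ Finset.range (k+1), (-1:ℝ)^(j+1) * (2*(j:ℝ)) * (L * Ey j + Ly * Ev j) = 0 := by
  have hEsum : ∑ j ∈ Finset.range k, (-1:ℝ)^j * (2*(j:ℝ)+2) * (2*L*Ox (j+1) + 2*L*Ey (j+1)
        + Lx*((ν-2*(j:ℝ)-3)*Od (j+1)) + Lx*((ν-2*(j:ℝ)-1)*Od j)
        + Ly*((2*(j:ℝ)+4)*Ev (j+2)) + Ly*((2*(j:ℝ)+2)*Ev (j+1))) = 0 :=
    Finset.sum_eq_zero fun j hj => by rw [hE j hj, mul_zero]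
  have hES : ∑ j ∈ Finset.range k, (-1:ℝ)^j * (2*(j:ℝ)+2) * (2*L*Ox (j+1) + 2*L*Ey (j+1)
        + Lx*((ν-2*(j:ℝ)-3)*Od (j+1)) + Lx*((ν-2*(j:ℝ)-1)*Od j)
        + Ly*((2*(j:ℝ)+4)*Ev (j+2)) + Ly*((2*(j:ℝ)+2)*Ev (j+1)))
      = 2*(∑ j ∈ Finset.range k, (-1:ℝ)^j * (2*(j:ℝ)+2) * (L * Ox (j+1)))
      + 2*(∑ j ∈ Finset.range k, (-1:ℝ)^j * (2*(j:ℝ)+2) * (L * Ey (j+1)))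
      + (∑ j ∈ Finset.range k, (-1:ℝ)^j * (2*(j:ℝ)+2) * (Lx*((ν-2*(j:ℝ)-3)*Od (j+1))))
      + (∑ j ∈ Finset.range k, (-1:ℝ)^j * (2*(j:ℝ)+2) * (Lx*((ν-2*(j:ℝ)-1)*Od j)))
      + (∑ j ∈ Finset.range k, (-1:ℝ)^j * (2*(j:ℝ)+2) * (Ly*((2*(j:ℝ)+4)*Ev (j+2))))
      + (∑ j ∈ Finset.range k, (-1:ℝ)^j * (2*(j:ℝ)+2) * (Ly*((2*(j:ℝ)+2)*Ev (j+1)))) := by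
    rw [Finset.mul_sum, Finset.mul_sum, ← Finset.sum_add_distrib, ← Finset.sum_add_distrib,
      ← Finset.sum_add_distrib, ← Finset.sum_add_distrib, ← Finset.sum_add_distrib]
    exact Finset.sum_congr rfl fun j _ => by ring
  rw [hES] at hEsum
  have tO := tel2 k (fun m => L * Ox m)
  have hA12 : ∑ j ∈ Finset.range k, (-1:ℝ)^j * (2*(j:ℝ)+2) * (L * Ox (j+1) + L * Ox j)
      = (∑ j ∈ Finset.range k, (-1:ℝ)^j * (2*(j:ℝ)+2) * (L * Ox (j+1)))
      + (∑ j ∈ Finset.range k, (-1:ℝ)^j * (2*(j:ℝ)+2) * (L * Ox j)) := by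
    rw [← Finset.sum_add_distrib]
    exact Finset.sum_congr rfl fun j _ => by ring
  have hB1 : ∑ j ∈ Finset.range k, 2*(-1:ℝ)^j * (L * Ox j)
      = 2 * ∑ j ∈ Finset.range k, (-1:ℝ)^j * (L * Ox j) := by
    rw [Finset.mul_sum]
    exact Finset.sum_congr rfl fun j _ => by ring
  rw [hA12, hB1] at tO
  have tV := tel2 k (fun m => Lx * ((ν - 1 - 2*(m:ℝ)) * Od m))
  have hA45 : ∑ j ∈ Finset.range k, (-1:ℝ)^j * (2*(j:ℝ)+2)
        * (Lx * ((ν - 1 - 2*((j+1:ℕ):ℝ)) * Od (j+1)) + Lx * ((ν - 1 - 2*(j:ℝ)) * Od j))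
      = (∑ j ∈ Finset.range k, (-1:ℝ)^j * (2*(j:ℝ)+2) * (Lx*((ν-2*(j:ℝ)-3)*Od (j+1))))
      + (∑ j ∈ Finset.range k, (-1:ℝ)^j * (2*(j:ℝ)+2) * (Lx*((ν-2*(j:ℝ)-1)*Od j))) := by
    rw [← Finset.sum_add_distrib]
    exact Finset.sum_congr rfl fun j _ => by push_cast; ring
  have hB2 : ∑ j ∈ Finset.range k, 2*(-1:ℝ)^j * (Lx * ((ν - 1 - 2*(j:ℝ)) * Od j))
      = 2 * ∑ j ∈ Finset.range k, (-1:ℝ)^j * (Lx*((ν-1-2*(j:ℝ))*Od j)) := by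
    rw [Finset.mul_sum]
    exact Finset.sum_congr rfl fun j _ => by ring
  rw [hA45, hB2] at tV
  have tS := tel2 k (fun m => Ly * ((2*(m:ℝ)+2) * Ev (m+1)))
  have hA67 : ∑ j ∈ Finset.range k, (-1:ℝ)^j * (2*(j:ℝ)+2)
        * (Ly * ((2*((j+1:ℕ):ℝ)+2) * Ev (j+1+1)) + Ly * ((2*(j:ℝ)+2) * Ev (j+1)))
      = (∑ j ∈ Finset.range k, (-1:ℝ)^j * (2*(j:ℝ)+2) * (Ly*((2*(j:ℝ)+4)*Ev (j+2))))
      + (∑ j ∈ Finset.range k, (-1:ℝ)^j * (2*(j:ℝ)+2) * (Ly*((2*(j:ℝ)+2)*Ev (j+1)))) := by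
    rw [← Finset.sum_add_distrib]
    refine Finset.sum_congr rfl fun j _ => ?_
    rw [show j+1+1 = j+2 from rfl]
    push_cast
    ring
  have hB3 : ∑ j ∈ Finset.range k, 2*(-1:ℝ)^j * (Ly * ((2*(j:ℝ)+2) * Ev (j+1)))
      = 2 * ∑ j ∈ Finset.range k, (-1:ℝ)^j * (Ly*((2*(j:ℝ)+2)*Ev (j+1))) := by
    rw [Finset.mul_sum]
    exact Finset.sum_congr rfl fun j _ => by ring
  rw [hA67, hB3, h2] at tS
  -- goal conversions
  have hG1b : ∑ j ∈ Finset.range k, (-1:ℝ)^j * (ν - 1 - 2*(j:ℝ)) * (L * Ox j + Lx * Od j)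
      = (ν+1) * (∑ j ∈ Finset.range k, (-1:ℝ)^j * (L * Ox j))
      - (∑ j ∈ Finset.range k, (-1:ℝ)^j * (2*(j:ℝ)+2) * (L * Ox j))
      + (∑ j ∈ Finset.range k, (-1:ℝ)^j * (Lx*((ν-1-2*(j:ℝ))*Od j))) := by
    rw [Finset.mul_sum, ← Finset.sum_sub_distrib, ← Finset.sum_add_distrib]
    exact Finset.sum_congr rfl fun j _ => by ring
  have hG1 : ∑ j ∈ Finset.range (k+1), (-1:ℝ)^j * (ν - 1 - 2*(j:ℝ)) * (L * Ox j + Lx * Od j)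
      = (ν+1) * (∑ j ∈ Finset.range k, (-1:ℝ)^j * (L * Ox j))
      - (∑ j ∈ Finset.range k, (-1:ℝ)^j * (2*(j:ℝ)+2) * (L * Ox j))
      + (∑ j ∈ Finset.range k, (-1:ℝ)^j * (Lx*((ν-1-2*(j:ℝ))*Od j)))
      + (-1:ℝ)^k * (ν - 1 - 2*(k:ℝ)) * (L * Ox k + Lx * Od k) := by
    rw [Finset.sum_range_succ, hG1b]
  have hG2b : ∑ j ∈ Finset.range k, (-1:ℝ)^(j+1+1) * (2*((j+1:ℕ):ℝ)) * (L * Ey (j+1) + Ly * Ev (j+1))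
      = (∑ j ∈ Finset.range k, (-1:ℝ)^j * (2*(j:ℝ)+2) * (L * Ey (j+1)))
      + (∑ j ∈ Finset.range k, (-1:ℝ)^j * (Ly*((2*(j:ℝ)+2)*Ev (j+1)))) := by
    rw [← Finset.sum_add_distrib]
    exact Finset.sum_congr rfl fun j _ => by push_cast; ring
  have hG2 : ∑ j ∈ Finset.range (k+1), (-1:ℝ)^(j+1) * (2*(j:ℝ)) * (L * Ey j + Ly * Ev j)
      = (∑ j ∈ Finset.range k, (-1:ℝ)^j * (2*(j:ℝ)+2) * (L * Ey (j+1)))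
      + (∑ j ∈ Finset.range k, (-1:ℝ)^j * (Ly*((2*(j:ℝ)+2)*Ev (j+1)))) := by
    rw [Finset.sum_range_succ', hG2b]
    norm_num
  have hKk : (∑ j ∈ Finset.range k, (-1:ℝ)^j * Ox j) + (-1:ℝ)^k * Ox k = 0 := by
    rw [← Finset.sum_range_succ]
    exact hK
  have hCO : ∑ j ∈ Finset.range k, (-1:ℝ)^j * (L * Ox j)
      = L * ∑ j ∈ Finset.range k, (-1:ℝ)^j * Ox j := by
    rw [Finset.mul_sum]
    exact Finset.sum_congr rfl fun j _ => by ring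
  linear_combination hG1 + hG2 + (1/2)*hEsum - tO - (1/2)*tV - (1/2)*tS
    + ((ν-1)*L)*hKk + (ν-1)*hCO
    + ((1+(k:ℝ))*(-1:ℝ)^k*Lx*Od k)*hν

lemma EE_closed0 (n : ℕ) (Λ : ℝ × ℝ → ℝ) (a : ℕ → ℝ × ℝ → ℝ) (z : ℝ × ℝ) :
    EE n Λ a z 0 = 2*(Λ z)*AAx n a z 0 + pdx Λ z*((n:ℝ)*AAv n a z 0)
      + pdy Λ z*(AAv n a z 1) := by
  rw [EE]
  norm_num

lemma EE_closed_even (n : ℕ) (Λ : ℝ × ℝ → ℝ) (a : ℕ → ℝ × ℝ → ℝ) (z : ℝ × ℝ) (j : ℕ) :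
    EE n Λ a z (2*j+2) = 2*(Λ z)*AAx n a z (2*j+2) + 2*(Λ z)*AAy n a z (2*j+1)
      + pdx Λ z*(((n:ℝ)-2*(j:ℝ)-2)*AAv n a z (2*j+2))
      + pdx Λ z*(((n:ℝ)-2*(j:ℝ))*AAv n a z (2*j))
      + pdy Λ z*((2*(j:ℝ)+3)*AAv n a z (2*j+3))
      + pdy Λ z*((2*(j:ℝ)+1)*AAv n a z (2*j+1)) := by
  rw [EE, if_neg (show ¬(2*j+2 = 0) by omega), if_pos (show 2 ≤ 2*j+2 by omega),
    if_pos (show 2 ≤ 2*j+2 by omega), show 2*j+2-1 = 2*j+1 from by omega,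
    show 2*j+2-2 = 2*j from by omega, show 2*j+2+1 = 2*j+3 from by omega,
    show 2*j+1 = 2*j+1 from rfl]
  push_cast
  ring

lemma EE_closed_odd (n : ℕ) (Λ : ℝ × ℝ → ℝ) (a : ℕ → ℝ × ℝ → ℝ) (z : ℝ × ℝ) (j : ℕ) :
    EE n Λ a z (2*j+3) = 2*(Λ z)*AAx n a z (2*j+3) + 2*(Λ z)*AAy n a z (2*j+2)
      + pdx Λ z*(((n:ℝ)-2*(j:ℝ)-3)*AAv n a z (2*j+3))
      + pdx Λ z*(((n:ℝ)-2*(j:ℝ)-1)*AAv n a z (2*j+1))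
      + pdy Λ z*((2*(j:ℝ)+4)*AAv n a z (2*j+4))
      + pdy Λ z*((2*(j:ℝ)+2)*AAv n a z (2*j+2)) := by
  rw [EE, if_neg (show ¬(2*j+3 = 0) by omega), if_pos (show 2 ≤ 2*j+3 by omega),
    if_pos (show 2 ≤ 2*j+3 by omega), show 2*j+3-1 = 2*j+2 from by omega,
    show 2*j+3-2 = 2*j+1 from by omega, show 2*j+3+1 = 2*j+4 from by omega,
    show 2*j+1+1 = 2*j+2 from by omega]
  push_cast
  ring

lemma kol_val1 (k n : ℕ) (hn : n = 2*k+1) (a : ℕ → ℝ × ℝ → ℝ) (c : ℝ)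
    (hKol : ∀ z, a (n - 1) z = c + ∑ j ∈ Finset.Icc 1 k, (-1 : ℝ) ^ (j + 1) * a (n - 1 - 2 * j) z)
    (w : ℝ × ℝ) :
    ∑ m ∈ Finset.range (k+1), (-1:ℝ)^m * a (2*m) w = (-1)^k * c := by
  apply alt_sum k (fun m => a (2*m) w) c
  have h := hKol w
  rw [show n-1 = 2*k from by omega] at h
  rw [h]
  congr 1
  exact Finset.sum_congr rfl fun j hj => by rw [show 2*k-2*j = 2*(k-j) from by omega]

lemma kol_val2 (k n : ℕ) (hn : n = 2*k+1) (a : ℕ → ℝ × ℝ → ℝ) (c : ℝ)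
    (hKol : ∀ z, a n z = c + ∑ j ∈ Finset.Icc 1 k, (-1 : ℝ) ^ (j + 1) * a (n - 2 * j) z)
    (w : ℝ × ℝ) :
    ∑ m ∈ Finset.range (k+1), (-1:ℝ)^m * a (2*m+1) w = (-1)^k * c := by
  apply alt_sum k (fun m => a (2*m+1) w) c
  have h := hKol w
  rw [hn] at h
  rw [h]
  congr 1
  refine Finset.sum_congr rfl fun j hj => ?_
  have hjk := Finset.mem_Icc.mp hj
  rw [show 2*k+1-2*j = 2*(k-j)+1 from by omega]

lemma kol_derx1 (k n : ℕ) (hn : n = 2*k+1) (a : ℕ → ℝ × ℝ → ℝ) (c : ℝ)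
    (ha : ∀ i, i ≤ n → ContDiff ℝ (⊤ : ℕ∞) (a i))
    (hKol : ∀ z, a (n - 1) z = c + ∑ j ∈ Finset.Icc 1 k, (-1 : ℝ) ^ (j + 1) * a (n - 1 - 2 * j) z)
    (z : ℝ × ℝ) :
    ∑ m ∈ Finset.range (k+1), (-1:ℝ)^m * AAx n a z (2*m) = 0 := by
  have hd : pdx (a (n-1)) z = ∑ j ∈ Finset.Icc 1 k, (-1:ℝ)^(j+1) * pdx (a (n-1-2*j)) z := by
    have hfun : (fun s => a (n-1) (s, z.2))
        = (fun s => c + ∑ j ∈ Finset.Icc 1 k, (-1:ℝ)^(j+1) * a (n-1-2*j) (s, z.2)) :=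
      funext fun s => hKol (s, z.2)
    have h1 : HasDerivAt (fun s => a (n-1) (s, z.2)) (pdx (a (n-1)) z) z.1 :=
      slicex (ha _ (by omega)) z
    rw [hfun] at h1
    have h2 : HasDerivAt (fun s => c + ∑ j ∈ Finset.Icc 1 k, (-1:ℝ)^(j+1) * a (n-1-2*j) (s, z.2))
        (∑ j ∈ Finset.Icc 1 k, (-1:ℝ)^(j+1) * pdx (a (n-1-2*j)) z) z.1 :=
      (HasDerivAt.fun_sum fun j hj => (slicex (ha _ (by omega)) z).const_mul _).const_add c
    exact h1.unique h2
  have key : AAx n a z (2*k) = 0 + ∑ j ∈ Finset.Icc 1 k, (-1:ℝ)^(j+1) * AAx n a z (2*(k-j)) := by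
    rw [AAx, if_pos (by omega), zero_add, show (2*k) = n-1 from by omega, hd]
    exact Finset.sum_congr rfl fun j hj => by
      rw [AAx, if_pos (by omega), show n-1-2*j = 2*(k-j) from by omega]
  have := alt_sum k (fun m => AAx n a z (2*m)) 0 key
  simpa using this

lemma kol_derx2 (k n : ℕ) (hn : n = 2*k+1) (a : ℕ → ℝ × ℝ → ℝ) (c : ℝ)
    (ha : ∀ i, i ≤ n → ContDiff ℝ (⊤ : ℕ∞) (a i))
    (hKol : ∀ z, a n z = c + ∑ j ∈ Finset.Icc 1 k, (-1 : ℝ) ^ (j + 1) * a (n - 2 * j) z)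
    (z : ℝ × ℝ) :
    ∑ m ∈ Finset.range (k+1), (-1:ℝ)^m * AAx n a z (2*m+1) = 0 := by
  have hd : pdx (a n) z = ∑ j ∈ Finset.Icc 1 k, (-1:ℝ)^(j+1) * pdx (a (n-2*j)) z := by
    have hfun : (fun s => a n (s, z.2))
        = (fun s => c + ∑ j ∈ Finset.Icc 1 k, (-1:ℝ)^(j+1) * a (n-2*j) (s, z.2)) :=
      funext fun s => hKol (s, z.2)
    have h1 : HasDerivAt (fun s => a n (s, z.2)) (pdx (a n) z) z.1 :=
      slicex (ha _ (by omega)) z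
    rw [hfun] at h1
    have h2 : HasDerivAt (fun s => c + ∑ j ∈ Finset.Icc 1 k, (-1:ℝ)^(j+1) * a (n-2*j) (s, z.2))
        (∑ j ∈ Finset.Icc 1 k, (-1:ℝ)^(j+1) * pdx (a (n-2*j)) z) z.1 :=
      (HasDerivAt.fun_sum fun j hj => (slicex (ha _ (by omega)) z).const_mul _).const_add c
    exact h1.unique h2
  have key : AAx n a z (2*k+1) = 0 + ∑ j ∈ Finset.Icc 1 k, (-1:ℝ)^(j+1) * AAx n a z (2*(k-j)+1) := by
    rw [AAx, if_pos (by omega), zero_add, show (2*k+1) = n from by omega, hd]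
    refine Finset.sum_congr rfl fun j hj => ?_
    have hjk := Finset.mem_Icc.mp hj
    rw [AAx, if_pos (by omega), show n-2*j = 2*(k-j)+1 from by omega]
  have := alt_sum k (fun m => AAx n a z (2*m+1)) 0 key
  simpa using this

theorem conservation_laws_odd_degree
    (k : ℕ) (hk : 1 ≤ k) (n : ℕ) (hn : n = 2 * k + 1)
    (Λ : ℝ × ℝ → ℝ) (a : ℕ → ℝ × ℝ → ℝ) (c₁ c₂ : ℝ)
    (hΛ : ContDiff ℝ (⊤ : ℕ∞) Λ) (hΛpos : ∀ z, 0 < Λ z)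
    (ha : ∀ i, i ≤ n → ContDiff ℝ (⊤ : ℕ∞) (a i))
    (hKol1 : ∀ z, a (n - 1) z =
      c₁ + ∑ j ∈ Finset.Icc 1 k, (-1 : ℝ) ^ (j + 1) * a (n - 1 - 2 * j) z)
    (hKol2 : ∀ z, a n z =
      c₂ + ∑ j ∈ Finset.Icc 1 k, (-1 : ℝ) ^ (j + 1) * a (n - 2 * j) z)
    (hHF : ∀ z, poisson
      (fun w => (w.2.1 ^ 2 + w.2.2 ^ 2) / (2 * Λ w.1))
      (fun w => ∑ i ∈ Finset.range (n + 1), a i w.1 * w.2.1 ^ (n - i) * w.2.2 ^ i) z = 0) :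
    (∀ z, pdx (fun w =>
        ((∑ j ∈ Finset.range k, (-1 : ℝ) ^ j * ((n : ℝ) - 1 - 2 * j) * a (2 * j) w)
          + (-1 : ℝ) ^ k * c₁) * Λ w) z
      + pdy (fun w =>
        ((∑ j ∈ Finset.Icc 1 k, (-1 : ℝ) ^ j * ((n : ℝ) + 1 - 2 * j) * a (2 * j - 1) w)
          + (-1 : ℝ) ^ k * (n : ℝ) * c₂) * Λ w) z = 0)
    ∧ (∀ z, pdx (fun w =>
        (∑ j ∈ Finset.Icc 1 k, (-1 : ℝ) ^ (j + 1) * ((n : ℝ) + 1 - 2 * j) * a (2 * j - 1) w) * Λ w) z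
      + pdy (fun w =>
        ((∑ j ∈ Finset.range k, (-1 : ℝ) ^ j * ((n : ℝ) - 1 - 2 * j) * a (2 * j) w)
          + (-1 : ℝ) ^ (k + 1) * ((n : ℝ) - 1) * c₁) * Λ w) z = 0) := by
  have hnR : (n:ℝ) = 2*(k:ℝ)+1 := by rw [hn]; push_cast; ring
  constructor
  · intro z
    have hfun1 : (fun w =>
          ((∑ j ∈ Finset.range k, (-1 : ℝ) ^ j * ((n : ℝ) - 1 - 2 * j) * a (2 * j) w)
            + (-1 : ℝ) ^ k * c₁) * Λ w)
        = (fun w => (∑ j ∈ Finset.range (k+1), (-1 : ℝ) ^ j * ((n : ℝ) - 2 * j) * a (2 * j) w) * Λ w) := by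
      funext w
      congr 1
      have hval := kol_val1 k n hn a c₁ hKol1 w
      have hsp : ∑ j ∈ Finset.range (k+1), (-1 : ℝ) ^ j * ((n : ℝ) - 2 * j) * a (2 * j) w
          = ∑ j ∈ Finset.range (k+1), ((-1 : ℝ) ^ j * ((n : ℝ) - 1 - 2 * j) * a (2 * j) w
            + (-1:ℝ)^j * a (2*j) w) :=
        Finset.sum_congr rfl fun j _ => by ring
      rw [hsp, Finset.sum_add_distrib,
        Finset.sum_range_succ (f := fun j => (-1 : ℝ) ^ j * ((n : ℝ) - 1 - 2 * j) * a (2 * j) w)]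
      linear_combination (-1 : ℝ) * hval - ((-1:ℝ)^k * a (2*k) w) * hnR
    have hfun2 : (fun w =>
          ((∑ j ∈ Finset.Icc 1 k, (-1 : ℝ) ^ j * ((n : ℝ) + 1 - 2 * j) * a (2 * j - 1) w)
            + (-1 : ℝ) ^ k * (n : ℝ) * c₂) * Λ w)
        = (fun w => (∑ j ∈ Finset.range (k+1), (-1 : ℝ) ^ j * (2 * (j:ℝ) + 1) * a (2 * j + 1) w) * Λ w) := by
      funext w
      congr 1
      have hval := kol_val2 k n hn a c₂ hKol2 w
      have hicc : ∑ j ∈ Finset.Icc 1 k, (-1 : ℝ) ^ j * ((n : ℝ) + 1 - 2 * j) * a (2 * j - 1) w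
          = ∑ j ∈ Finset.range k, (-1 : ℝ) ^ (j+1) * ((n : ℝ) - 1 - 2 * (j:ℝ)) * a (2 * j + 1) w := by
        rw [show Finset.Icc 1 k = Finset.Ico 1 (k+1) from by rw [Finset.Ico_add_one_right_eq_Icc],
          Finset.sum_Ico_eq_sum_range]
        apply Finset.sum_congr (by rw [Nat.add_sub_cancel])
        intro i hi
        rw [show 2*(1+i)-1 = 2*i+1 from by omega]
        push_cast
        ring
      have hsp : ∑ j ∈ Finset.range k, (-1 : ℝ)^j * (2*(j:ℝ)+1) * a (2*j+1) w
          = ∑ j ∈ Finset.range k, ((-1 : ℝ)^(j+1) * ((n:ℝ)-1-2*(j:ℝ)) * a (2*j+1) w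
            + (n:ℝ)*((-1:ℝ)^j * a (2*j+1) w)) :=
        Finset.sum_congr rfl fun j _ => by ring
      have hvk : (∑ j ∈ Finset.range k, (-1:ℝ)^j * a (2*j+1) w) + (-1:ℝ)^k * a (2*k+1) w
          = (-1:ℝ)^k * c₂ := by rw [← Finset.sum_range_succ]; exact hval
      rw [hicc, Finset.sum_range_succ (f := fun j => (-1 : ℝ) ^ j * (2 * (j:ℝ) + 1) * a (2 * j + 1) w),
        hsp, Finset.sum_add_distrib, ← Finset.mul_sum]
      linear_combination (-(n:ℝ))*hvk + ((-1:ℝ)^k * a (2*k+1) w)*hnR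
    rw [hfun1, hfun2]
    have hD1 : HasDerivAt (fun s =>
          (∑ j ∈ Finset.range (k+1), (-1 : ℝ) ^ j * ((n : ℝ) - 2 * j) * a (2 * j) (s, z.2)) * Λ (s, z.2))
        ((∑ j ∈ Finset.range (k+1), (-1 : ℝ) ^ j * ((n : ℝ) - 2 * j) * pdx (a (2*j)) z) * Λ z
          + (∑ j ∈ Finset.range (k+1), (-1 : ℝ) ^ j * ((n : ℝ) - 2 * j) * a (2 * j) z) * pdx Λ z) z.1 :=
      (HasDerivAt.fun_sum fun j hj =>
        (slicex (ha _ (by have := Finset.mem_range.mp hj; omega)) z).const_mul _).mul (slicex hΛ z)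
    have hD2 : HasDerivAt (fun s =>
          (∑ j ∈ Finset.range (k+1), (-1 : ℝ) ^ j * (2 * (j:ℝ) + 1) * a (2 * j + 1) (z.1, s)) * Λ (z.1, s))
        ((∑ j ∈ Finset.range (k+1), (-1 : ℝ) ^ j * (2 * (j:ℝ) + 1) * pdy (a (2*j+1)) z) * Λ z
          + (∑ j ∈ Finset.range (k+1), (-1 : ℝ) ^ j * (2 * (j:ℝ) + 1) * a (2 * j + 1) z) * pdy Λ z) z.2 :=
      (HasDerivAt.fun_sum fun j hj =>
        (slicey (ha _ (by have := Finset.mem_range.mp hj; omega)) z).const_mul _).mul (slicey hΛ z)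
    simp only [pdx, pdy]
    rw [hD1.deriv, hD2.deriv]
    have hE0ob : 2*(Λ z)*AAx n a z (2*0) + pdx Λ z*((n:ℝ)*AAv n a z (2*0))
        + pdy Λ z*(AAv n a z (2*0+1)) = 0 := by
      have h := EE_vanish k n hn Λ a hΛ hΛpos ha hHF z 0 (by omega)
      rw [EE_closed0] at h
      simpa using h
    have hEob : ∀ j ∈ Finset.range (k+1), 2*(Λ z)*AAx n a z (2*(j+1)) + 2*(Λ z)*AAy n a z (2*j+1)
        + pdx Λ z*(((n:ℝ)-2*(j:ℝ)-2)*AAv n a z (2*(j+1)))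
        + pdx Λ z*(((n:ℝ)-2*(j:ℝ))*AAv n a z (2*j))
        + pdy Λ z*((2*(j:ℝ)+3)*AAv n a z (2*(j+1)+1))
        + pdy Λ z*((2*(j:ℝ)+1)*AAv n a z (2*j+1)) = 0 := by
      intro j hj
      have hjk := Finset.mem_range.mp hj
      have h := EE_vanish k n hn Λ a hΛ hΛpos ha hHF z (2*j+2) (by omega)
      rw [EE_closed_even] at h
      simp only [show 2*(j+1) = 2*j+2 from by ring, show 2*(j+1)+1 = 2*j+3 from by ring]
      exact h
    have hKob := kol_derx1 k n hn a c₁ ha hKol1 z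
    have h1ob : AAx n a z (2*(k+1)) = 0 := by rw [AAx, if_neg (by omega)]
    have h2ob : AAv n a z (2*(k+1)) = 0 := by rw [AAv, if_neg (by omega)]
    have h3ob : AAv n a z (2*(k+1)+1) = 0 := by rw [AAv, if_neg (by omega)]
    have LAW := law1_alg k (n:ℝ) (Λ z) (pdx Λ z) (pdy Λ z)
      (fun m => AAv n a z (2*m)) (fun m => AAv n a z (2*m+1))
      (fun m => AAx n a z (2*m)) (fun m => AAy n a z (2*m+1))
      hE0ob hEob hKob h1ob h2ob h3ob
    have q1 : ∑ j ∈ Finset.range (k+1), (-1:ℝ)^j * ((n:ℝ) - 2*(j:ℝ))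
          * (Λ z * AAx n a z (2*j) + pdx Λ z * AAv n a z (2*j))
        = (∑ j ∈ Finset.range (k+1), (-1 : ℝ) ^ j * ((n : ℝ) - 2 * j) * pdx (a (2*j)) z) * Λ z
          + (∑ j ∈ Finset.range (k+1), (-1 : ℝ) ^ j * ((n : ℝ) - 2 * j) * a (2 * j) z) * pdx Λ z := by
      rw [Finset.sum_mul, Finset.sum_mul, ← Finset.sum_add_distrib]
      refine Finset.sum_congr rfl fun j hj => ?_
      have hjk := Finset.mem_range.mp hj
      rw [AAx, if_pos (by omega), AAv, if_pos (by omega)]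
      ring
    have q2 : ∑ j ∈ Finset.range (k+1), (-1:ℝ)^j * (2*(j:ℝ)+1)
          * (Λ z * AAy n a z (2*j+1) + pdy Λ z * AAv n a z (2*j+1))
        = (∑ j ∈ Finset.range (k+1), (-1 : ℝ) ^ j * (2 * (j:ℝ) + 1) * pdy (a (2*j+1)) z) * Λ z
          + (∑ j ∈ Finset.range (k+1), (-1 : ℝ) ^ j * (2 * (j:ℝ) + 1) * a (2 * j + 1) z) * pdy Λ z := by
      rw [Finset.sum_mul, Finset.sum_mul, ← Finset.sum_add_distrib]
      refine Finset.sum_congr rfl fun j hj => ?_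
      have hjk := Finset.mem_range.mp hj
      rw [AAy, if_pos (by omega), AAv, if_pos (by omega)]
      ring
    linear_combination LAW - q1 - q2
  · intro z
    have hfun3 : (fun w =>
          (∑ j ∈ Finset.Icc 1 k, (-1 : ℝ) ^ (j + 1) * ((n : ℝ) + 1 - 2 * j) * a (2 * j - 1) w) * Λ w)
        = (fun w => (∑ j ∈ Finset.range (k+1), (-1 : ℝ) ^ j * ((n : ℝ) - 1 - 2 * (j:ℝ)) * a (2 * j + 1) w) * Λ w) := by
      funext w
      congr 1
      have hicc : ∑ j ∈ Finset.Icc 1 k, (-1 : ℝ) ^ (j + 1) * ((n : ℝ) + 1 - 2 * j) * a (2 * j - 1) w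
          = ∑ j ∈ Finset.range k, (-1 : ℝ) ^ j * ((n : ℝ) - 1 - 2 * (j:ℝ)) * a (2 * j + 1) w := by
        rw [show Finset.Icc 1 k = Finset.Ico 1 (k+1) from by rw [Finset.Ico_add_one_right_eq_Icc],
          Finset.sum_Ico_eq_sum_range]
        apply Finset.sum_congr (by rw [Nat.add_sub_cancel])
        intro i hi
        rw [show 2*(1+i)-1 = 2*i+1 from by omega]
        push_cast
        ring
      rw [hicc,
        Finset.sum_range_succ (f := fun j => (-1 : ℝ) ^ j * ((n : ℝ) - 1 - 2 * (j:ℝ)) * a (2 * j + 1) w)]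
      linear_combination (-(-1:ℝ)^k * a (2*k+1) w) * hnR
    have hfun4 : (fun w =>
          ((∑ j ∈ Finset.range k, (-1 : ℝ) ^ j * ((n : ℝ) - 1 - 2 * j) * a (2 * j) w)
            + (-1 : ℝ) ^ (k + 1) * ((n : ℝ) - 1) * c₁) * Λ w)
        = (fun w => (∑ j ∈ Finset.range (k+1), (-1 : ℝ) ^ (j+1) * (2 * (j:ℝ)) * a (2 * j) w) * Λ w) := by
      funext w
      congr 1
      have hval := kol_val1 k n hn a c₁ hKol1 w
      have e2 : ∑ j ∈ Finset.range (k+1), (-1 : ℝ) ^ (j+1) * (2 * (j:ℝ)) * a (2 * j) w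
          = ∑ j ∈ Finset.range (k+1), ((-1 : ℝ) ^ j * ((n : ℝ) - 1 - 2 * (j:ℝ)) * a (2 * j) w
            - ((n:ℝ)-1)*((-1:ℝ)^j * a (2*j) w)) :=
        Finset.sum_congr rfl fun j _ => by ring
      rw [e2, Finset.sum_sub_distrib, ← Finset.mul_sum,
        Finset.sum_range_succ (f := fun j => (-1 : ℝ) ^ j * ((n : ℝ) - 1 - 2 * (j:ℝ)) * a (2 * j) w)]
      linear_combination ((n:ℝ)-1)*hval - ((-1:ℝ)^k * a (2*k) w)*hnR
    rw [hfun3, hfun4]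
    have hD3 : HasDerivAt (fun s =>
          (∑ j ∈ Finset.range (k+1), (-1 : ℝ) ^ j * ((n : ℝ) - 1 - 2 * (j:ℝ)) * a (2 * j + 1) (s, z.2)) * Λ (s, z.2))
        ((∑ j ∈ Finset.range (k+1), (-1 : ℝ) ^ j * ((n : ℝ) - 1 - 2 * (j:ℝ)) * pdx (a (2*j+1)) z) * Λ z
          + (∑ j ∈ Finset.range (k+1), (-1 : ℝ) ^ j * ((n : ℝ) - 1 - 2 * (j:ℝ)) * a (2 * j + 1) z) * pdx Λ z) z.1 :=
      (HasDerivAt.fun_sum fun j hj =>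
        (slicex (ha _ (by have := Finset.mem_range.mp hj; omega)) z).const_mul _).mul (slicex hΛ z)
    have hD4 : HasDerivAt (fun s =>
          (∑ j ∈ Finset.range (k+1), (-1 : ℝ) ^ (j+1) * (2 * (j:ℝ)) * a (2 * j) (z.1, s)) * Λ (z.1, s))
        ((∑ j ∈ Finset.range (k+1), (-1 : ℝ) ^ (j+1) * (2 * (j:ℝ)) * pdy (a (2*j)) z) * Λ z
          + (∑ j ∈ Finset.range (k+1), (-1 : ℝ) ^ (j+1) * (2 * (j:ℝ)) * a (2 * j) z) * pdy Λ z) z.2 :=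
      (HasDerivAt.fun_sum fun j hj =>
        (slicey (ha _ (by have := Finset.mem_range.mp hj; omega)) z).const_mul _).mul (slicey hΛ z)
    simp only [pdx, pdy]
    rw [hD3.deriv, hD4.deriv]
    have hE2ob : ∀ j ∈ Finset.range k, 2*(Λ z)*AAx n a z (2*(j+1)+1) + 2*(Λ z)*AAy n a z (2*(j+1))
        + pdx Λ z*(((n:ℝ)-2*(j:ℝ)-3)*AAv n a z (2*(j+1)+1))
        + pdx Λ z*(((n:ℝ)-2*(j:ℝ)-1)*AAv n a z (2*j+1))
        + pdy Λ z*((2*(j:ℝ)+4)*AAv n a z (2*(j+2)))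
        + pdy Λ z*((2*(j:ℝ)+2)*AAv n a z (2*(j+1))) = 0 := by
      intro j hj
      have hjk := Finset.mem_range.mp hj
      have h := EE_vanish k n hn Λ a hΛ hΛpos ha hHF z (2*j+3) (by omega)
      rw [EE_closed_odd] at h
      simp only [show 2*(j+1)+1 = 2*j+3 from by ring, show 2*(j+1) = 2*j+2 from by ring,
        show 2*(j+2) = 2*j+4 from by ring]
      exact h
    have hK2ob := kol_derx2 k n hn a c₂ ha hKol2 z
    have h2ob2 : AAv n a z (2*(k+1)) = 0 := by rw [AAv, if_neg (by omega)]
    have LAW2 := law2_alg k (n:ℝ) (Λ z) (pdx Λ z) (pdy Λ z)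
      (fun m => AAv n a z (2*m)) (fun m => AAv n a z (2*m+1))
      (fun m => AAx n a z (2*m+1)) (fun m => AAy n a z (2*m))
      hnR hE2ob hK2ob h2ob2
    have q3 : ∑ j ∈ Finset.range (k+1), (-1:ℝ)^j * ((n:ℝ) - 1 - 2*(j:ℝ))
          * (Λ z * AAx n a z (2*j+1) + pdx Λ z * AAv n a z (2*j+1))
        = (∑ j ∈ Finset.range (k+1), (-1 : ℝ) ^ j * ((n : ℝ) - 1 - 2 * (j:ℝ)) * pdx (a (2*j+1)) z) * Λ z
          + (∑ j ∈ Finset.range (k+1), (-1 : ℝ) ^ j * ((n : ℝ) - 1 - 2 * (j:ℝ)) * a (2 * j + 1) z) * pdx Λ z := by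
      rw [Finset.sum_mul, Finset.sum_mul, ← Finset.sum_add_distrib]
      refine Finset.sum_congr rfl fun j hj => ?_
      have hjk := Finset.mem_range.mp hj
      rw [AAx, if_pos (by omega), AAv, if_pos (by omega)]
      ring
    have q4 : ∑ j ∈ Finset.range (k+1), (-1:ℝ)^(j+1) * (2*(j:ℝ))
          * (Λ z * AAy n a z (2*j) + pdy Λ z * AAv n a z (2*j))
        = (∑ j ∈ Finset.range (k+1), (-1 : ℝ) ^ (j+1) * (2 * (j:ℝ)) * pdy (a (2*j)) z) * Λ z
          + (∑ j ∈ Finset.range (k+1), (-1 : ℝ) ^ (j+1) * (2 * (j:ℝ)) * a (2 * j) z) * pdy Λ z := by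
      rw [Finset.sum_mul, Finset.sum_mul, ← Finset.sum_add_distrib]
      refine Finset.sum_congr rfl fun j hj => ?_
      have hjk := Finset.mem_range.mp hj
      rw [AAy, if_pos (by omega), AAv, if_pos (by omega)]
      ring
    linear_combination LAW2 - q3 - q4
end

section
/- Let c₂ ∈ ℝ with c₂ ≠ 0, let f : ℝ² → ℝ be a smooth function whose Laplacian Δf is nowhere zero, and let a₀ : ℝ² → ℝ be a smooth function satisfying the first-order system a₀ₓ = −(1/(Δf)²)(c₂ f_yyy f_xy + c₂ f_xy f_xxy + 2a₀ Δf (f_xxx + f_xyy)) and a₀_y = (1/(Δf)²)(2 f_yy ((c₂ − a₀) f_yyy − a₀ f_xxy) − 2 f_xx (c₂ f_xxy + a₀ (f_yyy + f_xxy)) − c₂ f_xy (f_xyy + f_xxx)) identically on ℝ². Then f satisfies the fourth-order equation f_xy(f_yyyy − f_xxxx) + 3(f_yyy f_xyy − f_xxx f_xxy) + 2(f_yy f_xyyy − f_xx f_xxxy) = 0 identically on ℝ². -/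
open Real Finset

lemma pdx_eq {g : ℝ × ℝ → ℝ} (hg : Differentiable ℝ g) :
    pdx g = fun p => fderiv ℝ g p (1, 0) := by
  funext p
  exact ((hg p).hasFDerivAt.comp_hasDerivAt p.1
    (HasDerivAt.prodMk (hasDerivAt_id p.1) (hasDerivAt_const p.1 p.2))).deriv

lemma pdy_eq {g : ℝ × ℝ → ℝ} (hg : Differentiable ℝ g) :
    pdy g = fun p => fderiv ℝ g p (0, 1) := by
  funext p
  exact ((hg p).hasFDerivAt.comp_hasDerivAt p.2
    (HasDerivAt.prodMk (hasDerivAt_const p.2 p.1) (hasDerivAt_id p.2))).deriv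

lemma contDiff_pdx {g : ℝ × ℝ → ℝ} (hg : ContDiff ℝ (⊤ : ℕ∞) g) : ContDiff ℝ (⊤ : ℕ∞) (pdx g) := by
  rw [pdx_eq (hg.differentiable (by simp))]
  exact (hg.fderiv_right (by simp)).clm_apply contDiff_const

lemma contDiff_pdy {g : ℝ × ℝ → ℝ} (hg : ContDiff ℝ (⊤ : ℕ∞) g) : ContDiff ℝ (⊤ : ℕ∞) (pdy g) := by
  rw [pdy_eq (hg.differentiable (by simp))]
  exact (hg.fderiv_right (by simp)).clm_apply contDiff_const

lemma pdx_pdy_comm {g : ℝ × ℝ → ℝ} (hg : ContDiff ℝ (⊤ : ℕ∞) g) : pdx (pdy g) = pdy (pdx g) := by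
  have hgd : Differentiable ℝ g := hg.differentiable (by simp)
  have hF : ContDiff ℝ (⊤ : ℕ∞) (fderiv ℝ g) := hg.fderiv_right (by simp)
  have hFd : Differentiable ℝ (fderiv ℝ g) := hF.differentiable (by simp)
  rw [pdx_eq ((contDiff_pdy hg).differentiable (by simp)),
      pdy_eq ((contDiff_pdx hg).differentiable (by simp)),
      pdx_eq hgd, pdy_eq hgd]
  funext p
  have key : ∀ v w : ℝ × ℝ, fderiv ℝ (fun q => fderiv ℝ g q v) p w
      = fderiv ℝ (fderiv ℝ g) p w v := by
    intro v w
    rw [fderiv_clm_apply (hFd p) (differentiableAt_const v)]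
    simp
  rw [key, key]
  exact second_derivative_symmetric (fun y => (hgd y).hasFDerivAt) (hFd p).hasFDerivAt _ _

lemma hasDerivAt_sliceY {g : ℝ × ℝ → ℝ} (hg : ContDiff ℝ (⊤ : ℕ∞) g) (x y : ℝ) :
    HasDerivAt (fun s => g (x, s)) (pdy g (x, y)) y :=
  DifferentiableAt.hasDerivAt <| (hg.differentiable (by simp) (x, y)).comp y
      (DifferentiableAt.prodMk (differentiableAt_const x) differentiableAt_id)

lemma hasDerivAt_sliceX {g : ℝ × ℝ → ℝ} (hg : ContDiff ℝ (⊤ : ℕ∞) g) (x y : ℝ) :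
    HasDerivAt (fun s => g (s, y)) (pdx g (x, y)) x :=
  DifferentiableAt.hasDerivAt <| (hg.differentiable (by simp) (x, y)).comp x
      (DifferentiableAt.prodMk differentiableAt_id (differentiableAt_const y))

theorem quartic_case_fourth_order_equation
    (c₂ : ℝ) (hc₂ : c₂ ≠ 0)
    (f : ℝ × ℝ → ℝ) (hf : ContDiff ℝ (⊤ : ℕ∞) f)
    (hΔ : ∀ z, pdx (pdx f) z + pdy (pdy f) z ≠ 0)
    (a₀ : ℝ × ℝ → ℝ) (ha₀ : ContDiff ℝ (⊤ : ℕ∞) a₀)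
    (ha₀x : ∀ z, pdx a₀ z =
      -(1 / (pdx (pdx f) z + pdy (pdy f) z) ^ 2) *
        (c₂ * pdy (pdy (pdy f)) z * pdy (pdx f) z
          + c₂ * pdy (pdx f) z * pdy (pdx (pdx f)) z
          + 2 * a₀ z * (pdx (pdx f) z + pdy (pdy f) z) *
            (pdx (pdx (pdx f)) z + pdy (pdy (pdx f)) z)))
    (ha₀y : ∀ z, pdy a₀ z =
      (1 / (pdx (pdx f) z + pdy (pdy f) z) ^ 2) *
        (2 * pdy (pdy f) z * ((c₂ - a₀ z) * pdy (pdy (pdy f)) z - a₀ z * pdy (pdx (pdx f)) z)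
          - 2 * pdx (pdx f) z * (c₂ * pdy (pdx (pdx f)) z
            + a₀ z * (pdy (pdy (pdy f)) z + pdy (pdx (pdx f)) z))
          - c₂ * pdy (pdx f) z * (pdy (pdy (pdx f)) z + pdx (pdx (pdx f)) z))) :
    ∀ z, pdy (pdx f) z * (pdy (pdy (pdy (pdy f))) z - pdx (pdx (pdx (pdx f))) z)
      + 3 * (pdy (pdy (pdy f)) z * pdy (pdy (pdx f)) z
        - pdx (pdx (pdx f)) z * pdy (pdx (pdx f)) z)
      + 2 * (pdy (pdy f) z * pdy (pdy (pdy (pdx f))) z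
        - pdx (pdx f) z * pdy (pdx (pdx (pdx f))) z) = 0 := by
  intro z
  obtain ⟨x, y⟩ := z
  have h10 := contDiff_pdx hf
  have h01 := contDiff_pdy hf
  have h20 := contDiff_pdx h10
  have h11 := contDiff_pdy h10
  have h02 := contDiff_pdy h01
  have h30 := contDiff_pdx h20
  have h21 := contDiff_pdy h20
  have h12 := contDiff_pdy h11
  have h03 := contDiff_pdy h02
  have hD0 : pdx (pdx f) (x, y) + pdy (pdy f) (x, y) ≠ 0 := hΔ (x, y)
  have hne : (pdx (pdx f) (x, y) + pdy (pdy f) (x, y)) ^ 2 ≠ 0 := pow_ne_zero 2 hD0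
  -- y-derivative of ha₀x
  have d20 := hasDerivAt_sliceY h20 x y
  have d02 := hasDerivAt_sliceY h02 x y
  have d03 := hasDerivAt_sliceY h03 x y
  have d11 := hasDerivAt_sliceY h11 x y
  have d21 := hasDerivAt_sliceY h21 x y
  have d30 := hasDerivAt_sliceY h30 x y
  have d12 := hasDerivAt_sliceY h12 x y
  have da := hasDerivAt_sliceY ha₀ x y
  have hDy := d20.add d02
  have h1' := (((hasDerivAt_const y (1:ℝ)).div (hDy.pow 2) hne).neg).mul
    ((((d03.const_mul c₂).mul d11).add ((d11.const_mul c₂).mul d21)).add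
      (((da.const_mul 2).mul hDy).mul (d30.add d12)))
  have h0 := hasDerivAt_sliceY (contDiff_pdx ha₀) x y
  rw [show (fun s => pdx a₀ (x, s)) = _ from funext fun s => ha₀x (x, s)] at h0
  have h1 := h0.unique h1'
  -- x-derivative of ha₀y
  have e20 := hasDerivAt_sliceX h20 x y
  have e02 := hasDerivAt_sliceX h02 x y
  have e03 := hasDerivAt_sliceX h03 x y
  have e11 := hasDerivAt_sliceX h11 x y
  have e21 := hasDerivAt_sliceX h21 x y
  have e30 := hasDerivAt_sliceX h30 x y
  have e12 := hasDerivAt_sliceX h12 x y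
  have ea := hasDerivAt_sliceX ha₀ x y
  have hDx := e20.add e02
  have h2' := ((hasDerivAt_const x (1:ℝ)).div (hDx.pow 2) hne).mul
    (((((e02.const_mul 2).mul (((ea.const_sub c₂).mul e03).sub (ea.mul e21)))).sub
      ((e20.const_mul 2).mul ((e21.const_mul c₂).add (ea.mul (e03.add e21))))).sub
      ((e11.const_mul c₂).mul (e12.add e30)))
  have h0b := hasDerivAt_sliceX (contDiff_pdy ha₀) x y
  rw [show (fun t => pdy a₀ (t, y)) = _ from funext fun t => ha₀y (t, y)] at h0b
  have h2 := h0b.unique h2'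
  -- Clairaut and commutation rewrites
  have key := congrFun (pdx_pdy_comm ha₀) (x, y)
  rw [h1, h2] at key
  rw [pdx_pdy_comm h02, pdx_pdy_comm h01, pdx_pdy_comm h11, pdx_pdy_comm h10,
      pdx_pdy_comm h20, pdx_pdy_comm hf, ha₀x (x, y), ha₀y (x, y)] at key
  simp only [Pi.add_apply, Pi.mul_apply, Pi.div_apply, Pi.neg_apply, Pi.pow_apply, Pi.sub_apply] at key
  field_simp at key
  have main : c₂ * (pdx (pdx f) (x, y) + pdy (pdy f) (x, y)) ^ 6 * (pdy (pdx f) (x,y) * (pdy (pdy (pdy (pdy f))) (x,y) - pdx (pdx (pdx (pdx f))) (x,y)) + 3 * (pdy (pdy (pdy f)) (x,y) * pdy (pdy (pdx f)) (x,y) - pdx (pdx (pdx f)) (x,y) * pdy (pdx (pdx f)) (x,y)) + 2 * (pdy (pdy f) (x,y) * pdy (pdy (pdy (pdx f))) (x,y) - pdx (pdx f) (x,y) * pdy (pdx (pdx (pdx f))) (x,y))) = 0 := by linear_combination ((pdx (pdx f) (x, y) + pdy (pdy f) (x, y))^4) * key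
  exact (mul_eq_zero.mp main).resolve_left (mul_ne_zero hc₂ (pow_ne_zero 6 hD0))
end
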